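/- arXiv:0811.4572 — 8 statements merged into one kernel-verified Lean document; each statement's English description precedes it below -/
import Mathlib

section
/- Let K be a field of characteristic different from 2 containing a primitive n-th root of unity for an odd positive integer n. Then the one-dimensional quadratic form ⟨n⟩ is isometric over K to ⟨(-1)^((n-1)/2)⟩; equivalently, (-1)^((n-1)/2)·n is a square in K. -/
/-!
Pairing `k` with `n - k` in `∏_{0<k<n} (1 - ω^k) = n` gives factors
`(1 - ω^k)(1 - ω^(n-k)) = -ω^(n-k) (1 - ω^k)^2`, and `ω` is a square because `n` is odd
(`ω = (ω^((n+1)/2))^2`). Hence `(-1)^((n-1)/2) n` is a product of squares.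
-/

open Finset

theorem IsSquare.of_pow_eq_one_of_odd {M : Type*} [Monoid M] {x : M} {n : ℕ} (hn : Odd n)
    (hx : x ^ n = 1) : IsSquare x := by
  obtain ⟨m, rfl⟩ := hn
  refine ⟨x ^ (m + 1), ?_⟩
  rw [← pow_add, show m + 1 + (m + 1) = 2 * m + 1 + 1 by ring, pow_succ, hx, one_mul]

theorem Finset.prod_range_two_mul_eq_prod_mul_reflect {M : Type*} [CommMonoid M] (f : ℕ → M)
    (m : ℕ) : ∏ k ∈ range (2 * m), f k = ∏ k ∈ range m, f k * f (2 * m - 1 - k) := by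
  rw [two_mul, prod_range_add, ← prod_range_reflect (fun k ↦ f (m + k)), ← prod_mul_distrib]
  refine prod_congr rfl fun k hk ↦ ?_
  rw [mem_range] at hk
  congr 2
  omega

theorem isSquare_neg_one_sub_pow_mul_one_sub_pow {R : Type*} [CommRing R] {ω : R} {n a b : ℕ}
    (hn : Odd n) (hω : ω ^ n = 1) (hab : a + b = n) :
    IsSquare (-((1 - ω ^ a) * (1 - ω ^ b))) := by
  have hinv : ω ^ a * ω ^ b = 1 := by rw [← pow_add, hab, hω]
  rw [show -((1 - ω ^ a) * (1 - ω ^ b)) = ω ^ b * (1 - ω ^ a) ^ 2 by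
    linear_combination (1 - ω ^ a) * hinv]
  exact ((IsSquare.of_pow_eq_one_of_odd hn hω).pow b).mul (IsSquare.sq _)

theorem IsPrimitiveRoot.neg_one_pow_mul_order_eq_prod {R : Type*} [CommRing R] [IsDomain R]
    {ω : R} {m : ℕ} (hω : IsPrimitiveRoot ω (2 * m + 1)) :
    (-1) ^ m * (2 * m + 1 : R) = ∏ k ∈ range m, -((1 - ω ^ (k + 1)) * (1 - ω ^ (2 * m - k))) := by
  have hprod := hω.prod_one_sub_pow_eq_order
  push_cast at hprod
  rw [prod_range_two_mul_eq_prod_mul_reflect (fun k ↦ 1 - ω ^ (k + 1))] at hprod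
  rw [prod_neg, card_range, ← hprod]
  refine congrArg _ (prod_congr rfl fun k hk ↦ ?_)
  rw [mem_range] at hk
  rw [show 2 * m - 1 - k + 1 = 2 * m - k by omega]

theorem symbol_diag_n_eq_sign_general (K : Type*) [Field K]
    (n : ℕ) (hodd : Odd n) (ω : K) (hω : IsPrimitiveRoot ω n) :
    IsSquare ((-1 : K) ^ ((n - 1) / 2) * (n : K)) := by
  obtain ⟨m, rfl⟩ := hodd
  rw [show (2 * m + 1 - 1) / 2 = m by omega]
  push_cast
  rw [hω.neg_one_pow_mul_order_eq_prod]
  refine isSquare_prod _ fun k hk ↦ ?_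
  rw [mem_range] at hk
  exact isSquare_neg_one_sub_pow_mul_one_sub_pow ⟨m, rfl⟩ hω.pow_eq_one (by omega)

/-- If `K` is a field of characteristic ≠ 2 containing a primitive `n`-th root of unity
for an odd positive integer `n`, then `(-1)^((n-1)/2) * n` is a square in `K`. -/
theorem symbol_diag_n_eq_sign (K : Type*) [Field K] (hchar : ringChar K ≠ 2)
    (n : ℕ) (hpos : 0 < n) (hodd : Odd n) (ω : K) (hω : IsPrimitiveRoot ω n) :
    IsSquare ((-1 : K) ^ ((n - 1) / 2) * (n : K)) :=
  symbol_diag_n_eq_sign_general K n hodd ω hω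
end

section
/- Let K be a field of characteristic different from 2 containing a primitive n-th root of unity for an odd positive integer n. Then the quadratic form n × ⟨1⟩ (the sum of n squares form) is isometric to ⟨(-1)^((n-1)/2)⟩ ⊥ ((n-1)/2) × H, where H = ⟨1,-1⟩ is the hyperbolic plane. -/
/-!
With `n = 2m + 1`, the vectors `u_k = (ω ^ (k * i))_i` satisfy `u_k ⬝ᵥ u_l = n` if `n ∣ k + l` and
`0` otherwise. Hence `c • u_0` together with `u_k ± (2n)⁻¹ • u_{-k}` for `1 ≤ k ≤ m` form an
orthogonal basis on which the sum of squares takes the values `n c²` and `±1`. It remains to choose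
`c` with `n c² = (-1)^m`, which is possible because `(-1)^m n` is a square: in
`n = ∏_{k=1}^{n-1} (1 - ω^k)`, pairing `k` with `n - k` gives factors
`(1 - ω^k)(1 - ω^{-k}) = -ω^{-k}(1 - ω^k)²`, and every power of `ω` is a square since `n` is odd.
-/

open Finset QuadraticMap

theorem associated_weightedSumSquares_one {K ι : Type*} [CommRing K] [Invertible (2 : K)]
    [Fintype ι] (x y : ι → K) :
    associated (R := K) (weightedSumSquares K fun _ : ι => (1 : K)) x y = x ⬝ᵥ y := by
  simp only [associated_apply, weightedSumSquares_apply, Pi.add_apply, dotProduct,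
    ← sum_sub_distrib, smul_sum, smul_eq_mul]
  refine Finset.sum_congr rfl fun i _ => ?_
  rw [invOf_smul_eq_iff, two_smul]
  ring

theorem equivalent_weightedSumSquares_one_of_dotProduct_eq_ite {K ι κ : Type*} [Field K]
    [Invertible (2 : K)] [Fintype ι] [Fintype κ] [DecidableEq κ] {v : κ → ι → K} {w : κ → K}
    (hv : ∀ a b, v a ⬝ᵥ v b = if a = b then w a else 0) (hw : ∀ a, w a ≠ 0)
    (hcard : Fintype.card κ = Fintype.card ι) :
    Equivalent (weightedSumSquares K fun _ : ι => (1 : K)) (weightedSumSquares K w) := by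
  set Q := weightedSumSquares K fun _ : ι => (1 : K)
  have hB : ∀ x y, associated (R := K) Q x y = x ⬝ᵥ y := associated_weightedSumSquares_one
  have hQ : ∀ a, Q (v a) = w a := fun a => by
    rw [← associated_eq_self_apply K, hB, hv, if_pos rfl]
  have hortho : (associated (R := K) Q).IsOrthoᵢ v := fun a b hab =>
    (hB _ _).trans ((hv a b).trans (if_neg hab))
  have hli : LinearIndependent K v := LinearMap.BilinForm.linearIndependent_of_iIsOrtho hortho
    fun a => by rw [associated_eq_self_apply, hQ]; exact hw a
  let b := basisOfLinearIndependentOfCardEqFinrank' v hli (by simpa using hcard)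
  have hb : ⇑b = v := coe_basisOfLinearIndependentOfCardEqFinrank' v hli _
  have hrepr := basisRepr_eq_of_iIsOrtho Q b (hb ▸ hortho)
  simp only [hb, hQ] at hrepr
  exact hrepr ▸ ⟨Q.isometryEquivBasisRepr b⟩

theorem one_sub_mul_one_sub_eq_neg_sq {R : Type*} [CommRing R] {x y : R} {m : ℕ}
    (hxy : x * y = 1) (hy : y ^ (2 * m + 1) = 1) :
    (1 - x) * (1 - y) = -(y ^ (m + 1) * (1 - x)) ^ 2 := by
  linear_combination (x - 1) * hxy + y * (1 - x) ^ 2 * hy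

def negOnePowHyperbolicWeights (K : Type*) [Ring K] (m : ℕ) : Fin 1 ⊕ Fin m × Fin 2 → K :=
  Sum.elim (fun _ => (-1) ^ m) fun p => if p.2 = 0 then 1 else -1

theorem negOnePowHyperbolicWeights_ne_zero {K : Type*} [Ring K] [Nontrivial K] {m : ℕ}
    (a : Fin 1 ⊕ Fin m × Fin 2) : negOnePowHyperbolicWeights K m a ≠ 0 := by
  rcases a with _ | ⟨_, ε⟩
  · exact (isUnit_one.neg.pow m).ne_zero
  · simp only [negOnePowHyperbolicWeights, Sum.elim_inr]
    split_ifs <;> simp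

def fourierVec {K : Type*} [DivisionRing K] (ω : K) (n : ℕ) (k : ℤ) : Fin n → K :=
  fun i => ω ^ (k * i)

namespace IsPrimitiveRoot

variable {K : Type*} [Field K] {ω : K} {n : ℕ}

theorem sum_zpow_mul (hω : IsPrimitiveRoot ω n) (x : ℤ) :
    ∑ i : Fin n, ω ^ (x * i) = if (n : ℤ) ∣ x then (n : K) else 0 := by
  have hpow : ∀ i : ℕ, ω ^ (x * i) = (ω ^ x) ^ i := fun i => by rw [zpow_mul, zpow_natCast]
  simp only [hpow, Fin.sum_univ_eq_sum_range (fun i => (ω ^ x) ^ i)]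
  split_ifs with hx
  · simp [(hω.zpow_eq_one_iff_dvd x).mpr hx]
  · have hx1 : ω ^ x ≠ 1 := mt (hω.zpow_eq_one_iff_dvd x).mp hx
    rw [geom_sum_eq hx1, ← zpow_natCast, ← zpow_mul, mul_comm, zpow_mul, zpow_natCast,
      hω.pow_eq_one, one_zpow, sub_self, zero_div]

theorem fourierVec_dotProduct (hω : IsPrimitiveRoot ω n) (k l : ℤ) :
    fourierVec ω n k ⬝ᵥ fourierVec ω n l = if (n : ℤ) ∣ k + l then (n : K) else 0 := by
  rw [← hω.sum_zpow_mul]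
  refine Finset.sum_congr rfl fun i _ => ?_
  rw [fourierVec, fourierVec, add_mul, zpow_add₀ (hω.ne_zero (Fin.pos i).ne')]

theorem fourierVec_dotProduct_of_neg_lt_of_lt (hω : IsPrimitiveRoot ω n) {k l : ℤ}
    (h₁ : -n < k + l) (h₂ : k + l < n) :
    fourierVec ω n k ⬝ᵥ fourierVec ω n l = if k + l = 0 then (n : K) else 0 := by
  rw [hω.fourierVec_dotProduct]
  congr 1
  exact propext ⟨fun h => Int.eq_zero_of_abs_lt_dvd h (abs_lt.mpr ⟨h₁, h₂⟩),
    fun h => h ▸ dvd_zero _⟩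

theorem fourierVec_zero_dotProduct_add_smul_neg (hω : IsPrimitiveRoot ω n) {b : ℤ}
    (hb : 0 < b) (hbn : b < n) (t : K) :
    fourierVec ω n 0 ⬝ᵥ (fourierVec ω n b + t • fourierVec ω n (-b)) = 0 := by
  simp (disch := omega) only [dotProduct_add, dotProduct_smul,
    hω.fourierVec_dotProduct_of_neg_lt_of_lt]
  rw [if_neg (by omega), if_neg (by omega), smul_zero, add_zero]

theorem dotProduct_fourierVec_add_smul_neg (hω : IsPrimitiveRoot ω n) {a b : ℤ} (ha : 0 < a)
    (hb : 0 < b) (hab : a + b < n) (s t : K) :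
    (fourierVec ω n a + s • fourierVec ω n (-a)) ⬝ᵥ (fourierVec ω n b + t • fourierVec ω n (-b))
      = if a = b then (s + t) * n else 0 := by
  simp (disch := omega) only [add_dotProduct, dotProduct_add, smul_dotProduct, dotProduct_smul,
    hω.fourierVec_dotProduct_of_neg_lt_of_lt, smul_eq_mul]
  split_ifs <;> first | omega | ring

theorem isSquare_neg_one_pow_mul {m : ℕ} (hω : IsPrimitiveRoot ω (2 * m + 1)) :
    IsSquare ((-1) ^ m * ((2 * m + 1 : ℕ) : K)) := by
  have hprod : ((2 * m + 1 : ℕ) : K) =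
      ∏ k ∈ range m, (1 - ω ^ (k + 1)) * (1 - ω ^ (2 * m - k)) := by
    calc ((2 * m + 1 : ℕ) : K) = ∏ k ∈ range (m + m), (1 - ω ^ (k + 1)) := by
          rw [← two_mul, hω.prod_one_sub_pow_eq_order]; push_cast; rfl
      _ = (∏ k ∈ range m, (1 - ω ^ (k + 1))) * ∏ k ∈ range m, (1 - ω ^ (m + k + 1)) :=
          prod_range_add _ m m
      _ = (∏ k ∈ range m, (1 - ω ^ (k + 1))) * ∏ k ∈ range m, (1 - ω ^ (2 * m - k)) := by
          rw [← prod_range_reflect (fun k => 1 - ω ^ (m + k + 1))]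
          congr 1
          refine prod_congr rfl fun k hk => ?_
          rw [show m + (m - 1 - k) + 1 = 2 * m - k by have := mem_range.mp hk; omega]
      _ = _ := prod_mul_distrib.symm
  have hpair : ∀ k ∈ range m, (1 - ω ^ (k + 1)) * (1 - ω ^ (2 * m - k)) =
      -((ω ^ (2 * m - k)) ^ (m + 1) * (1 - ω ^ (k + 1))) ^ 2 := fun k hk => by
    have hinv : ω ^ (k + 1) * ω ^ (2 * m - k) = 1 := by
      rw [← pow_add, show k + 1 + (2 * m - k) = 2 * m + 1 by have := mem_range.mp hk; omega,
        hω.pow_eq_one]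
    have hroot : (ω ^ (2 * m - k)) ^ (2 * m + 1) = 1 := by
      rw [← pow_mul, mul_comm, pow_mul, hω.pow_eq_one, one_pow]
    exact one_sub_mul_one_sub_eq_neg_sq hinv hroot
  refine ⟨∏ k ∈ range m, (ω ^ (2 * m - k)) ^ (m + 1) * (1 - ω ^ (k + 1)), ?_⟩
  rw [hprod, prod_congr rfl hpair, prod_neg, card_range, prod_pow, ← mul_assoc, ← pow_add,
    ← two_mul, pow_mul, neg_one_sq, one_pow, one_mul, pow_two]

theorem exists_dotProduct_eq_ite_negOnePowHyperbolicWeights [NeZero (2 : K)] {m : ℕ}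
    (hω : IsPrimitiveRoot ω (2 * m + 1)) :
    ∃ v : Fin 1 ⊕ Fin m × Fin 2 → Fin (2 * m + 1) → K, ∀ a b,
      v a ⬝ᵥ v b = if a = b then negOnePowHyperbolicWeights K m a else 0 := by
  obtain ⟨r, hr⟩ := hω.isSquare_neg_one_pow_mul
  set n := 2 * m + 1
  set w := negOnePowHyperbolicWeights K m
  have hn : (n : K) ≠ 0 := hω.neZero'.out
  refine ⟨Sum.elim (fun _ => (r / n) • fourierVec ω n 0) fun p =>
    fourierVec ω n (p.1 + 1) + (w (.inr p) / (2 * n)) • fourierVec ω n (-(p.1 + 1)), ?_⟩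
  rintro (i | ⟨j, ε⟩) (i' | ⟨j', ε'⟩)
  · simp (disch := omega) only [Sum.elim_inl, smul_dotProduct, dotProduct_smul,
      hω.fourierVec_dotProduct_of_neg_lt_of_lt, add_zero, if_true, smul_eq_mul, w,
      negOnePowHyperbolicWeights]
    rw [if_pos (congrArg _ (Subsingleton.elim _ _))]
    field_simp
    linear_combination -hr
  · rw [if_neg Sum.inl_ne_inr, Sum.elim_inl, Sum.elim_inr, smul_dotProduct,
      hω.fourierVec_zero_dotProduct_add_smul_neg (by omega) (by omega), smul_zero]
  · rw [if_neg Sum.inr_ne_inl, dotProduct_comm, Sum.elim_inl, Sum.elim_inr, smul_dotProduct,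
      hω.fourierVec_zero_dotProduct_add_smul_neg (by omega) (by omega), smul_zero]
  · simp only [Sum.elim_inr, Sum.inr.injEq, Prod.mk.injEq]
    rw [hω.dotProduct_fourierVec_add_smul_neg (by omega) (by omega) (by omega)]
    by_cases hj : j = j'
    · subst hj
      rw [if_pos rfl, show ∀ x y : K, (x / (2 * n) + y / (2 * n)) * n = (x + y) / 2 from
        fun x y => by field_simp]
      fin_cases ε <;> fin_cases ε' <;>
        norm_num [w, negOnePowHyperbolicWeights, neg_div, div_self (two_ne_zero' K)]
    · rw [if_neg (by omega), if_neg (by tauto)]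

theorem weightedSumSquares_one_equivalent [Invertible (2 : K)] {m : ℕ}
    (hω : IsPrimitiveRoot ω (2 * m + 1)) :
    Equivalent (weightedSumSquares K fun _ : Fin (2 * m + 1) => (1 : K))
      (weightedSumSquares K (negOnePowHyperbolicWeights K m)) := by
  obtain ⟨v, hv⟩ := hω.exists_dotProduct_eq_ite_negOnePowHyperbolicWeights
  exact equivalent_weightedSumSquares_one_of_dotProduct_eq_ite hv
    negOnePowHyperbolicWeights_ne_zero (by simp; ring)

end IsPrimitiveRoot

theorem sum_n_squares_equivalent_general (K : Type*) [Field K] (hchar : ringChar K ≠ 2)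
    (n : ℕ) (hodd : Odd n) (ω : K) (hω : IsPrimitiveRoot ω n) :
    QuadraticMap.Equivalent
      (QuadraticMap.weightedSumSquares K (fun _ : Fin n => (1 : K)))
      (QuadraticMap.weightedSumSquares K
        (Sum.elim (fun _ : Fin 1 => (-1 : K) ^ ((n - 1) / 2))
          (fun p : Fin ((n - 1) / 2) × Fin 2 => if p.2 = 0 then (1 : K) else -1))) := by
  let := invertibleOfNonzero (Ring.two_ne_zero hchar)
  obtain ⟨m, rfl⟩ := hodd
  rw [show (2 * m + 1 - 1) / 2 = m by omega]
  exact hω.weightedSumSquares_one_equivalent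

/-- For `K` a field of characteristic ≠ 2 containing a primitive `n`-th root of unity,
`n` odd, the sum-of-`n`-squares form is isometric to
`⟨(-1)^((n-1)/2)⟩ ⊥ ((n-1)/2) × ℍ` where `ℍ = ⟨1,-1⟩`. -/
theorem sum_n_squares_equivalent (K : Type*) [Field K] (hchar : ringChar K ≠ 2)
    (n : ℕ) (hpos : 0 < n) (hodd : Odd n) (ω : K) (hω : IsPrimitiveRoot ω n) :
    QuadraticMap.Equivalent
      (QuadraticMap.weightedSumSquares K (fun _ : Fin n => (1 : K)))
      (QuadraticMap.weightedSumSquares K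
        (Sum.elim (fun _ : Fin 1 => (-1 : K) ^ ((n - 1) / 2))
          (fun p : Fin ((n - 1) / 2) × Fin 2 => if p.2 = 0 then (1 : K) else -1))) :=
  sum_n_squares_equivalent_general K hchar n hodd ω hω
end

section
/- Let K be a field of characteristic not 2 containing a primitive n-th root of unity where n is a positive integer with a prime divisor p satisfying p ≡ 3 or 5 (mod 8). Then the level of K is at most 2, i.e., -1 is a sum of two squares in K. -/
private lemma sumTwoSq_mul {K : Type*} [CommRing K] {x y : K}
    (hx : ∃ a b : K, a ^ 2 + b ^ 2 = x) (hy : ∃ a b : K, a ^ 2 + b ^ 2 = y) :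
    ∃ a b : K, a ^ 2 + b ^ 2 = x * y := by
  obtain ⟨a, b, rfl⟩ := hx
  obtain ⟨c, d, rfl⟩ := hy
  exact ⟨a * c - b * d, a * d + b * c, by ring⟩

/-- If `K` (char ≠ 2) contains a primitive `n`-th root of unity where `n` has a prime
divisor `p ≡ 3` or `5 (mod 8)`, then the level of `K` is at most `2`: `-1` is a sum
of two squares in `K`. -/
theorem level_le_two_of_primitiveRoot (K : Type*) [Field K] (hchar : ringChar K ≠ 2)
    (n p : ℕ) (hpos : 0 < n) (hp : p.Prime) (hdvd : p ∣ n)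
    (hmod : p % 8 = 3 ∨ p % 8 = 5) (ω : K) (hω : IsPrimitiveRoot ω n) :
    ∃ a b : K, a ^ 2 + b ^ 2 = -1 := by
  haveI : Fact p.Prime := ⟨hp⟩
  have hp2 : p ≠ 2 := by rcases hmod with h | h <;> omega
  have hpodd : p % 2 = 1 := Nat.odd_iff.mp (hp.odd_of_ne_two hp2)
  have hp3 : 3 ≤ p := by have := hp.two_le; omega
  -- 2 is not a square mod p
  have hns : ¬ IsSquare (2 : ZMod p) := by
    rw [ZMod.exists_sq_eq_two_iff hp2]; omega
  have h2ne : (2 : ZMod p) ≠ 0 := by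
    have h : ((2 : ℕ) : ZMod p) ≠ 0 := by
      rw [Ne, ZMod.natCast_eq_zero_iff]
      intro h
      exact hp2 ((Nat.prime_dvd_prime_iff_eq hp Nat.prime_two).mp h)
    exact_mod_cast h
  set m : ℕ := p / 2 with hm
  -- Euler's criterion: 2 ^ m = -1 in ZMod p
  have heuler : (2 : ZMod p) ^ m = -1 := by
    have hsq : ((2 : ZMod p) ^ m) ^ 2 = 1 := by
      rw [← pow_mul]
      have h1 : m * 2 = p - 1 := by omega
      rw [h1, ZMod.pow_card_sub_one_eq_one h2ne]
    have hne1 : (2 : ZMod p) ^ m ≠ 1 := fun h => hns ((ZMod.euler_criterion p h2ne).mpr h)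
    exact (sq_eq_one_iff.mp hsq).resolve_left hne1
  -- 2 ^ m ≡ p - 1 [MOD p]
  have hmodeq : 2 ^ m % p = (p - 1) % p := by
    rw [← ZMod.natCast_eq_natCast_iff']
    push_cast
    rw [heuler]
    have h : ((p - 1 : ℕ) : ZMod p) = (p : ZMod p) - 1 := by
      have h1 : (1 : ℕ) ≤ p := by omega
      push_cast [Nat.cast_sub h1]; ring
    rw [h, ZMod.natCast_self]; ring
  -- the primitive p-th root of unity
  obtain ⟨k, hk⟩ := hdvd
  have hζ0 : IsPrimitiveRoot (ω ^ k) p := hω.pow hpos (by rw [hk, mul_comm])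
  set ζ : K := ω ^ k with hζdef
  clear_value ζ
  have hζp : ζ ^ p = 1 := hζ0.pow_eq_one
  have hζ1 : ζ ≠ 1 := hζ0.ne_one (by omega)
  have hpowmod : ∀ a : ℕ, ζ ^ a = ζ ^ (a % p) := by
    intro a
    conv_lhs => rw [← Nat.div_add_mod a p]
    rw [pow_add, pow_mul, hζp, one_pow, one_mul]
  have hhalf : (p + 1) / 2 * 2 = p + 1 := by omega
  -- telescoping product
  have htel : ∀ M : ℕ,
      (1 - ζ) * ∏ j ∈ Finset.range M, (1 + ζ ^ (2 ^ j)) = 1 - ζ ^ (2 ^ M) := by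
    intro M
    induction M with
    | zero => simp
    | succ M ih =>
      rw [Finset.prod_range_succ, ← mul_assoc, ih]
      have h : ζ ^ 2 ^ (M + 1) = (ζ ^ 2 ^ M) ^ 2 := by
        rw [← pow_mul, ← pow_succ]
      rw [h]; ring
  -- value of the product
  have hprodval : (∏ j ∈ Finset.range m, (1 + ζ ^ (2 ^ j))) = -(ζ ^ (p - 1)) := by
    have h1 : ζ ^ (2 ^ m) = ζ ^ (p - 1) := by
      rw [hpowmod, hmodeq, ← hpowmod]
    have h2 := htel m
    rw [h1] at h2
    have hcyc : ζ * ζ ^ (p - 1) = 1 := by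
      rw [← pow_succ']
      have h4 : p - 1 + 1 = p := by omega
      rw [h4, hζp]
    have h3 : 1 - ζ ^ (p - 1) = (1 - ζ) * (-(ζ ^ (p - 1))) := by
      calc 1 - ζ ^ (p - 1) = ζ * ζ ^ (p - 1) - ζ ^ (p - 1) := by rw [hcyc]
        _ = (1 - ζ) * (-(ζ ^ (p - 1))) := by ring
    rw [h3] at h2
    exact mul_left_cancel₀ (sub_ne_zero.mpr (Ne.symm hζ1)) h2
  -- every factor is a sum of two squares
  have hfac : ∀ j : ℕ, ∃ a b : K, a ^ 2 + b ^ 2 = 1 + ζ ^ (2 ^ j) := by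
    intro j
    refine ⟨1, ζ ^ (2 ^ j * ((p + 1) / 2)), ?_⟩
    rw [one_pow, ← pow_mul]
    congr 1
    have he : 2 ^ j * ((p + 1) / 2) * 2 = 2 ^ j * p + 2 ^ j := by
      rw [mul_assoc, hhalf]; ring
    rw [he, pow_add, mul_comm (2 ^ j) p, pow_mul, hζp, one_pow, one_mul]
  -- the whole product is a sum of two squares
  have hS : ∃ a b : K, a ^ 2 + b ^ 2 = ∏ j ∈ Finset.range m, (1 + ζ ^ (2 ^ j)) :=
    Finset.prod_induction _ (fun x => ∃ a b : K, a ^ 2 + b ^ 2 = x)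
      (fun x y hx hy => sumTwoSq_mul hx hy) ⟨1, 0, by ring⟩ (fun j _ => hfac j)
  rw [hprodval] at hS
  -- ζ ^ (p+1) is a square, hence a sum of two squares
  have hsq2 : ∃ a b : K, a ^ 2 + b ^ 2 = ζ ^ (p + 1) := by
    refine ⟨ζ ^ ((p + 1) / 2), 0, ?_⟩
    rw [← pow_mul, hhalf]; ring
  obtain ⟨a, b, hab⟩ := sumTwoSq_mul hS hsq2
  refine ⟨a, b, ?_⟩
  rw [hab]
  have hexp : p - 1 + (p + 1) = p * 2 := by omega
  rw [neg_mul, ← pow_add, hexp, pow_mul, hζp, one_pow]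
end

section
/- Let K be a field of characteristic different from 2 and not dividing n, containing a primitive n-th root of unity ω, with n odd, and let S = (a,b; n, K, ω) be the symbol algebra generated by x, y with xⁿ = a, yⁿ = b, yx = ωxy, for a, b ∈ K×. Then the trace form T_S(z) = Trd_S(z²) is isometric to ⟨n⟩ ⊥ ((n²-1)/2) × H. -/
/-!
Index the basis `xⁱ yʲ` by `g = (i, j) ∈ (ℤ/n)²`. Then `c_g c_h = φ(g, h) c_{g+h}` with
`φ(g, h) ≠ 0`, and left multiplication by `c_g` is traceless unless `g = 0`, so
`Trd(z²) = n ∑_g φ(g, -g) z_g z_{-g}`; associativity gives `φ(g, -g) = φ(-g, g)`.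
Since `n` is odd, `g ↦ -g` fixes only `0`, which contributes `⟨n⟩`; the other `n² - 1`
indices fall into pairs `{g, -g}`, on each of which the form is `2β uv` with `β ≠ 0`,
a hyperbolic plane because `2` is invertible.
-/

section OddOrder

variable {G : Type*} [AddCommGroup G] [Fintype G]

theorem eq_zero_of_neg_eq_self_of_odd_card (hG : Odd (Fintype.card G)) {g : G} (hg : -g = g) :
    g = 0 := by
  obtain ⟨m, hm⟩ := hG
  have h2g : 2 • g = 0 := by rw [two_nsmul, ← neg_add_cancel g, hg]
  have := card_nsmul_eq_zero (x := g)
  rwa [hm, add_nsmul, mul_nsmul, h2g, nsmul_zero, zero_add, one_nsmul] at this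

theorem exists_equiv_zero_sum_neg_pairs {m : ℕ} (hG : Fintype.card G = 2 * m + 1) :
    ∃ E : Fin 1 ⊕ Fin m × Fin 2 ≃ G,
      E (.inl 0) = 0 ∧ ∀ k, E (.inr (k, 1)) = -E (.inr (k, 0)) := by
  classical
  have hne : ∀ g : G, g ≠ 0 → -g ≠ g := fun g hg h =>
    hg (eq_zero_of_neg_eq_self_of_odd_card ⟨m, hG⟩ h)
  -- a linear order on `G` selects one element `g < -g` from each pair
  let f := Fintype.equivFin G
  let P := {g : G // f g < f (-g)}
  let F : Fin 1 ⊕ P × Fin 2 → G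
    | .inl _ => 0
    | .inr (p, j) => if j = 0 then p else -p
  have hF : Function.Bijective F := by
    refine ⟨?_, fun g => ?_⟩
    · have hP0 : ∀ p : P, (p : G) ≠ 0 := fun p h => (lt_irrefl (f 0)) (by simpa [h] using p.2)
      have hPneg : ∀ p q : P, (p : G) ≠ -q := fun p q h =>
        lt_asymm p.2 (by simpa [h] using q.2)
      rintro (i | ⟨p, j⟩) (i' | ⟨q, j'⟩) h
      · rw [Subsingleton.elim i i']
      · fin_cases j' <;> simp [F, eq_comm, hP0] at h
      · fin_cases j <;> simp [F, hP0] at h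
      · fin_cases j <;> fin_cases j' <;>
          simp only [F, Fin.zero_eta, Fin.mk_one, one_ne_zero, ↓reduceIte, neg_inj] at h
        · rw [Subtype.ext h]
        · exact (hPneg p q h).elim
        · exact (hPneg q p h.symm).elim
        · rw [Subtype.ext h]
    · by_cases h0 : g = 0
      · exact ⟨.inl 0, h0.symm⟩
      rcases lt_or_gt_of_ne (f.injective.ne (hne g h0).symm) with h | h
      · exact ⟨.inr (⟨g, h⟩, 0), rfl⟩
      · exact ⟨.inr (⟨-g, by rwa [neg_neg]⟩, 1), neg_neg g⟩
  have hP : Fintype.card P = m := by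
    have := Fintype.card_congr (Equiv.ofBijective F hF)
    simp only [Fintype.card_sum, Fintype.card_prod, Fintype.card_fin] at this
    omega
  refine ⟨((Equiv.refl _).sumCongr ((Fintype.equivFinOfCardEq hP).symm.prodCongr
    (Equiv.refl _))).trans (Equiv.ofBijective F hF), rfl, fun k => ?_⟩
  simp [F]

end OddOrder

section Blocks

variable {R M ι κ μ : Type*} [Semiring R] [AddCommMonoid M] [Module R M]

noncomputable def blockLinearEquiv (A : κ → (μ → M) ≃ₗ[R] (μ → M)) :
    (ι ⊕ κ × μ → M) ≃ₗ[R] (ι ⊕ κ × μ → M) :=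
  (LinearEquiv.sumArrowLequivProdArrow _ _ R M).trans <|
    ((LinearEquiv.refl R _).prodCongr ((LinearEquiv.curry R M _ _).trans <|
      (LinearEquiv.piCongrRight A).trans (LinearEquiv.curry R M _ _).symm)).trans
    (LinearEquiv.sumArrowLequivProdArrow _ _ R M).symm

theorem blockLinearEquiv_inl (A : κ → (μ → M) ≃ₗ[R] (μ → M)) (w : ι ⊕ κ × μ → M) (i : ι) :
    blockLinearEquiv A w (.inl i) = w (.inl i) := by
  simp [blockLinearEquiv]

theorem blockLinearEquiv_inr (A : κ → (μ → M) ≃ₗ[R] (μ → M)) (w : ι ⊕ κ × μ → M) (k : κ)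
    (j : μ) : blockLinearEquiv A w (.inr (k, j)) = A k (fun j => w (.inr (k, j))) j := by
  simp only [blockLinearEquiv, LinearEquiv.trans_apply, LinearEquiv.prodCongr_apply,
    LinearEquiv.coe_curry, LinearEquiv.coe_curry_symm,
    LinearEquiv.sumArrowLequivProdArrow_symm_apply_inr, Function.uncurry_apply_pair,
    LinearEquiv.piCongrRight_apply]
  rfl

end Blocks

section Hyperbolic

variable {K : Type*} [Field K]

noncomputable def hyperbolicEquiv (β : K) (hβ : β ≠ 0) (h2 : (2 : K) ≠ 0) :
    (Fin 2 → K) ≃ₗ[K] (Fin 2 → K) :=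
  Matrix.toLinearEquiv' !![β, 2⁻¹; β, -2⁻¹] <| Matrix.invertibleOfIsUnitDet _ <| by
    have : Matrix.det !![β, 2⁻¹; β, -2⁻¹] = -β := by
      rw [Matrix.det_fin_two_of]
      field_simp
      ring
    simpa [this] using hβ

theorem hyperbolicEquiv_sq_sub_sq (β : K) (hβ : β ≠ 0) (h2 : (2 : K) ≠ 0) (u : Fin 2 → K) :
    hyperbolicEquiv β hβ h2 u 0 ^ 2 - hyperbolicEquiv β hβ h2 u 1 ^ 2 = 2 * β * u 0 * u 1 := by
  rw [hyperbolicEquiv, ← LinearEquiv.coe_coe, Matrix.toLinearEquiv'_apply]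
  simp only [Matrix.toLin'_apply, Matrix.mulVec, dotProduct, Matrix.of_apply, Matrix.cons_val',
    Matrix.cons_val_fin_one, Matrix.cons_val_zero, Fin.sum_univ_two, Matrix.cons_val_one]
  field_simp
  ring

theorem exists_linearEquiv_sum_mul_neg_eq_weighted_sq {G : Type*} [AddCommGroup G] [Fintype G]
    {m : ℕ} (hG : Fintype.card G = 2 * m + 1) (h2 : (2 : K) ≠ 0) (γ : G → K)
    (hγ_neg : ∀ g, γ (-g) = γ g) (hγ : ∀ g, g ≠ 0 → γ g ≠ 0) :
    ∃ e : (G → K) ≃ₗ[K] (Fin 1 ⊕ Fin m × Fin 2 → K), ∀ r : G → K,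
      ∑ g, γ g * (r g * r (-g)) =
        ∑ i, Sum.elim (fun _ : Fin 1 => γ 0)
          (fun p : Fin m × Fin 2 => if p.2 = 0 then (1 : K) else -1) i * (e r i) ^ 2 := by
  obtain ⟨E, hE0, hE1⟩ := exists_equiv_zero_sum_neg_pairs hG
  have hEk : ∀ k, E (.inr (k, 0)) ≠ 0 := fun k h => by
    simpa using E.injective (h.trans hE0.symm)
  refine ⟨(LinearEquiv.funCongrLeft K K E).trans (blockLinearEquiv fun k =>
    hyperbolicEquiv (γ (E (.inr (k, 0)))) (hγ _ (hEk k)) h2), fun r => ?_⟩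
  rw [← E.sum_comp, Fintype.sum_sum_type, Fintype.sum_sum_type, Fintype.sum_prod_type,
    Fintype.sum_prod_type]
  simp only [Fin.sum_univ_two, Fin.sum_univ_one, LinearEquiv.trans_apply, blockLinearEquiv_inl,
    blockLinearEquiv_inr, Sum.elim_inl, Sum.elim_inr, LinearEquiv.funCongrLeft_apply, hE0, hE1,
    neg_zero, neg_neg, hγ_neg]
  congr 1
  · simp only [LinearMap.funLeft_apply, hE0]
    ring
  refine Finset.sum_congr rfl fun k _ => ?_
  have hk := hyperbolicEquiv_sq_sub_sq _ (hγ _ (hEk k)) h2 (fun j => r (E (.inr (k, j))))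
  simp only [hE1] at hk
  simp only [LinearMap.funLeft_apply, if_pos, one_mul, if_neg (by decide : (1 : Fin 2) ≠ 0)]
  linear_combination -hk

end Hyperbolic

section TwistedGroupAlgebra

variable {K S G : Type*} [Field K] [Ring S] [Algebra K S]

variable (K S) in
-- `Algebra.trace` is only defined for commutative algebras.
noncomputable def leftMulTrace : S →ₗ[K] K :=
  LinearMap.trace K S ∘ₗ LinearMap.mul K S

theorem leftMulTrace_apply (u : S) :
    leftMulTrace K S u = LinearMap.trace K S (LinearMap.mulLeft K u) := rfl

variable [AddCommGroup G] (c : Module.Basis G K S) (φ : G → G → K)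
  (hmul : ∀ g h, c g * c h = φ g h • c (g + h)) (hone : c 0 = 1)

include hmul hone

theorem cocycle_neg_comm (g : G) : φ (-g) g = φ g (-g) := by
  have hassoc := mul_assoc (c g) (c (-g)) (c g)
  rw [hmul g (-g), hmul (-g) g, add_neg_cancel, neg_add_cancel, hone, smul_mul_assoc, one_mul,
    mul_smul_comm, mul_one] at hassoc
  exact (smul_left_injective K (c.ne_zero g) hassoc).symm

variable [Fintype G] [DecidableEq G]

theorem leftMulTrace_basis (g : G) :
    leftMulTrace K S (c g) = if g = 0 then (Fintype.card G : K) else 0 := by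
  rw [leftMulTrace_apply, LinearMap.trace_eq_matrix_trace K c]
  split_ifs with hg
  · rw [hg, hone, LinearMap.mulLeft_one, LinearMap.toMatrix_id, Matrix.trace_one]
  · refine Finset.sum_eq_zero fun h _ => ?_
    rw [Matrix.diag_apply, LinearMap.toMatrix_apply, LinearMap.mulLeft_apply, hmul, map_smul,
      c.repr_self, Finsupp.smul_apply, Finsupp.single_eq_of_ne (by simpa using hg), smul_zero]

theorem leftMulTrace_basis_mul (g h : G) :
    leftMulTrace K S (c g * c h) = if g + h = 0 then Fintype.card G * φ g h else 0 := by
  rw [hmul, map_smul, leftMulTrace_basis c φ hmul hone, smul_eq_mul, mul_ite, mul_zero, mul_comm]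

theorem leftMulTrace_mul_self (z : S) :
    leftMulTrace K S (z * z) =
      Fintype.card G * ∑ g, φ g (-g) * (c.repr z g * c.repr z (-g)) := by
  conv_lhs => rw [← c.sum_repr z, Finset.sum_mul_sum]
  simp only [smul_mul_smul_comm, map_sum, map_smul, leftMulTrace_basis_mul c φ hmul hone,
    smul_eq_mul, mul_ite, mul_zero, add_eq_zero_iff_eq_neg', Finset.sum_ite_eq', Finset.mem_univ,
    if_true]
  rw [Finset.mul_sum]
  exact Finset.sum_congr rfl fun g _ => by ring

end TwistedGroupAlgebra

section SymbolAlgebra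

variable {K S : Type*} [Field K] [Ring S] [Algebra K S] {x y : S}

theorem mul_pow_eq_smul_pow_mul {ω : K} (hyx : y * x = algebraMap K S ω * (x * y)) (k : ℕ) :
    y * x ^ k = ω ^ k • (x ^ k * y) := by
  induction k with
  | zero => simp
  | succ k ih =>
    rw [pow_succ, ← mul_assoc, ih, smul_mul_assoc, mul_assoc, hyx, ← Algebra.smul_def,
      mul_smul_comm, smul_smul, ← mul_assoc, ← pow_succ, ← pow_succ]

theorem pow_mul_pow_eq_smul_pow_mul_pow {ω : K} (hyx : y * x = algebraMap K S ω * (x * y))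
    (j k : ℕ) : y ^ j * x ^ k = ω ^ (j * k) • (x ^ k * y ^ j) := by
  induction j with
  | zero => simp
  | succ j ih =>
    rw [pow_succ, mul_assoc, mul_pow_eq_smul_pow_mul hyx, mul_smul_comm, ← mul_assoc, ih,
      smul_mul_assoc, smul_smul, mul_assoc, ← pow_succ, ← pow_add, Nat.succ_mul, add_comm]

theorem pow_eq_smul_pow_mod {n : ℕ} {a : K} (hx : x ^ n = algebraMap K S a) (m : ℕ) :
    x ^ m = a ^ (m / n) • x ^ (m % n) := by
  conv_lhs => rw [← Nat.mod_add_div m n, pow_add, pow_mul, hx, ← map_pow, ← Algebra.commutes,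
    ← Algebra.smul_def]

variable (n : ℕ) (ω a b : K)

-- `xⁱ yʲ · xᵏ yˡ = ω^{jk} x^{i+k} y^{j+l}`, exponents then reduced mod `n` via `xⁿ = a`, `yⁿ = b`.
def symbolCocycle (g h : Fin n × Fin n) : K :=
  ω ^ ((g.2 : ℕ) * h.1) * a ^ ((g.1 + h.1 : ℕ) / n) * b ^ ((g.2 + h.2 : ℕ) / n)

theorem symbolCocycle_ne_zero (hω : ω ≠ 0) (ha : a ≠ 0) (hb : b ≠ 0)
    (g h : Fin n × Fin n) : symbolCocycle n ω a b g h ≠ 0 := by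
  unfold symbolCocycle
  exact mul_ne_zero (mul_ne_zero (pow_ne_zero _ hω) (pow_ne_zero _ ha)) (pow_ne_zero _ hb)

theorem monomial_mul_monomial [NeZero n] (hx : x ^ n = algebraMap K S a)
    (hy : y ^ n = algebraMap K S b) (hyx : y * x = algebraMap K S ω * (x * y))
    (g h : Fin n × Fin n) :
    x ^ (g.1 : ℕ) * y ^ (g.2 : ℕ) * (x ^ (h.1 : ℕ) * y ^ (h.2 : ℕ)) =
      symbolCocycle n ω a b g h • (x ^ ((g + h).1 : ℕ) * y ^ ((g + h).2 : ℕ)) := by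
  calc x ^ (g.1 : ℕ) * y ^ (g.2 : ℕ) * (x ^ (h.1 : ℕ) * y ^ (h.2 : ℕ))
      = x ^ (g.1 : ℕ) * (y ^ (g.2 : ℕ) * x ^ (h.1 : ℕ)) * y ^ (h.2 : ℕ) := by noncomm_ring
    _ = ω ^ ((g.2 : ℕ) * h.1) • (x ^ (g.1 + h.1 : ℕ) * y ^ (g.2 + h.2 : ℕ)) := by
      rw [pow_mul_pow_eq_smul_pow_mul_pow hyx, mul_smul_comm, smul_mul_assoc, pow_add, pow_add]
      noncomm_ring
    _ = _ := by
      rw [pow_eq_smul_pow_mod hx (g.1 + h.1 : ℕ), pow_eq_smul_pow_mod hy (g.2 + h.2 : ℕ),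
        smul_mul_smul_comm, smul_smul, Prod.fst_add, Prod.snd_add, Fin.val_add, Fin.val_add,
        symbolCocycle, mul_assoc]

end SymbolAlgebra

theorem traceForm_symbolAlgebra_odd_general (K : Type*) [Field K]
    (n : ℕ) (hodd : Odd n)
    (hchar2 : ringChar K ≠ 2) (hcharn : ¬ ringChar K ∣ n)
    (ω a b : K) (ha : a ≠ 0) (hb : b ≠ 0) (hω : IsPrimitiveRoot ω n)
    (S : Type*) [Ring S] [Algebra K S] (x y : S)
    (hx : x ^ n = algebraMap K S a) (hy : y ^ n = algebraMap K S b)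
    (hyx : y * x = algebraMap K S ω * (x * y))
    (bS : Module.Basis (Fin n × Fin n) K S)
    (hbS : ∀ p : Fin n × Fin n, bS p = x ^ (p.1 : ℕ) * y ^ (p.2 : ℕ)) :
    ∃ e : S ≃ₗ[K] ((Fin 1 ⊕ Fin ((n ^ 2 - 1) / 2) × Fin 2) → K),
      ∀ z : S,
        (n : K)⁻¹ * LinearMap.trace K S (LinearMap.mulLeft K (z * z)) =
          ∑ i, Sum.elim (fun _ : Fin 1 => (n : K))
            (fun p : Fin ((n ^ 2 - 1) / 2) × Fin 2 => if p.2 = 0 then (1 : K) else -1) i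
            * (e z i) ^ 2 := by
  have : NeZero n := ⟨hodd.pos.ne'⟩
  have hn : (n : K) ≠ 0 := fun h => hcharn ((ringChar.spec K n).1 h)
  set φ := symbolCocycle n ω a b
  have hmul : ∀ g h, bS g * bS h = φ g h • bS (g + h) := fun g h => by
    simp only [hbS]
    exact monomial_mul_monomial n ω a b hx hy hyx g h
  have hone : bS 0 = 1 := by simp [hbS]
  have hcard : Fintype.card (Fin n × Fin n) = 2 * ((n ^ 2 - 1) / 2) + 1 := by
    obtain ⟨k, rfl⟩ := hodd
    simp only [Fintype.card_prod, Fintype.card_fin]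
    ring_nf
    omega
  obtain ⟨e, he⟩ := exists_linearEquiv_sum_mul_neg_eq_weighted_sq hcard (Ring.two_ne_zero hchar2)
    (fun g => n * φ g (-g)) (fun g => by simp only [neg_neg, cocycle_neg_comm bS φ hmul hone])
    (fun g _ => mul_ne_zero hn
      (symbolCocycle_ne_zero n ω a b (hω.ne_zero hodd.pos.ne') ha hb _ _))
  have hφ0 : φ 0 0 = 1 := by simp [φ, symbolCocycle]
  simp only [neg_zero, hφ0, mul_one] at he
  refine ⟨bS.equivFun.trans e, fun z => ?_⟩
  rw [← leftMulTrace_apply, leftMulTrace_mul_self bS φ hmul hone, Fintype.card_prod,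
    Fintype.card_fin, Nat.cast_mul, ← mul_assoc, inv_mul_cancel_left₀ hn, Finset.mul_sum]
  simpa only [mul_assoc, LinearEquiv.trans_apply, Module.Basis.equivFun_apply]
    using he (bS.repr z)

/-- Trace form of a symbol algebra of odd degree `n`:
`T_S ≃ ⟨n⟩ ⊥ ((n²-1)/2) × ℍ`.  Here the symbol algebra `S = (a,b; n, K, ω)` is
presented as a `K`-algebra with generators `x, y` satisfying `xⁿ = a`, `yⁿ = b`,
`yx = ω·xy` and basis `{xⁱyʲ}`, and the trace form is
`z ↦ Trd_S(z²) = n⁻¹ · Tr(left multiplication by z²)`. -/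
theorem traceForm_symbolAlgebra_odd (K : Type*) [Field K]
    (n : ℕ) (hpos : 0 < n) (hodd : Odd n)
    (hchar2 : ringChar K ≠ 2) (hcharn : ¬ ringChar K ∣ n)
    (ω a b : K) (ha : a ≠ 0) (hb : b ≠ 0) (hω : IsPrimitiveRoot ω n)
    (S : Type*) [Ring S] [Algebra K S] (x y : S)
    (hx : x ^ n = algebraMap K S a) (hy : y ^ n = algebraMap K S b)
    (hyx : y * x = algebraMap K S ω * (x * y))
    (bS : Module.Basis (Fin n × Fin n) K S)
    (hbS : ∀ p : Fin n × Fin n, bS p = x ^ (p.1 : ℕ) * y ^ (p.2 : ℕ)) :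
    ∃ e : S ≃ₗ[K] ((Fin 1 ⊕ Fin ((n ^ 2 - 1) / 2) × Fin 2) → K),
      ∀ z : S,
        (n : K)⁻¹ * LinearMap.trace K S (LinearMap.mulLeft K (z * z)) =
          ∑ i, Sum.elim (fun _ : Fin 1 => (n : K))
            (fun p : Fin ((n ^ 2 - 1) / 2) × Fin 2 => if p.2 = 0 then (1 : K) else -1) i
            * (e z i) ^ 2 :=
  traceForm_symbolAlgebra_odd_general K n hodd hchar2 hcharn ω a b ha hb hω S x y hx hy hyx bS hbS
end

section
/- Let φ ≃ ⟨a₁, ..., a_m⟩ be a diagonalized symmetric bilinear form over a field K of characteristic ≠ 2, and 0 ≤ k ≤ m. Then the k-fold exterior power Λᵏφ is isometric to the orthogonal sum, over all index sets 1 ≤ i₁ < ... < i_k ≤ m, of the one-dimensional forms ⟨a_{i₁}···a_{i_k}⟩. -/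
/-!
The wedge map `w` factors through a linear map `⋀ᵏV → W`, which is onto because the image of
`w` spans `W`, hence bijective because both sides have dimension `C(m, k)`. So the wedges
`b_{s₁} ∧ ⋯ ∧ b_{s_k}`, over the increasingly enumerated `k`-subsets `s` of the diagonalizing
basis, form a basis of `W`. The Gram matrix of `Λᵏφ` in this basis consists of the `k × k` minors
of `diag(a)`: those with row set `s` different from the column set have a zero row, and the
principal ones equal `∏_{i ∈ s} aᵢ`. A quadratic form with an orthogonal basis is the weighted
sum of squares of the coordinates.
-/

/-- `B'` is (a model of) the `k`-fold exterior power of the bilinear form `B`: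
`W` has dimension `C(dim V, k)` and carries an alternating multilinear wedge map
whose image spans `W` and on which `B'` is given by the determinant pairing
`Λᵏφ(x₁∧...∧x_k, y₁∧...∧y_k) = det(φ(xᵢ, yⱼ))`. -/
def IsExteriorPower (K : Type*) [Field K] {V W : Type*} [AddCommGroup V] [Module K V]
    [AddCommGroup W] [Module K W] (k : ℕ) (B : LinearMap.BilinForm K V)
    (B' : LinearMap.BilinForm K W) : Prop :=
  Module.finrank K W = (Module.finrank K V).choose k ∧
  ∃ w : AlternatingMap K V W (Fin k),
    Submodule.span K (Set.range fun v : Fin k → V => w v) = ⊤ ∧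
    ∀ v u : Fin k → V, B' (w v) (w u) = Matrix.det (Matrix.of fun i j => B (v i) (u j))

open Module

namespace LinearMap.BilinMap

variable {R M ι : Type*} [CommRing R] [AddCommGroup M] [Module R M] [Fintype ι]

theorem basisRepr_toQuadraticMap_of_isOrthoᵢ (B : LinearMap.BilinForm R M) (b : Basis ι R M)
    (hB : B.IsOrthoᵢ b) :
    B.toQuadraticMap.basisRepr b = QuadraticMap.weightedSumSquares R fun i => B (b i) (b i) := by
  classical
  ext x
  simp only [QuadraticMap.basisRepr_apply, toQuadraticMap_apply, map_sum, map_smul,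
    LinearMap.sum_apply, LinearMap.smul_apply, smul_eq_mul,
    QuadraticMap.weightedSumSquares_apply]
  refine Finset.sum_congr rfl fun i _ => ?_
  rw [Finset.sum_eq_single i
    (fun j _ hji => by rw [LinearMap.isOrthoᵢ_def.mp hB j i hji, mul_zero]) (by simp)]
  ring

theorem toQuadraticMap_equivalent_weightedSumSquares_of_isOrthoᵢ (B : LinearMap.BilinForm R M)
    (b : Basis ι R M) (hB : B.IsOrthoᵢ b) :
    B.toQuadraticMap.Equivalent (QuadraticMap.weightedSumSquares R fun i => B (b i) (b i)) :=
  ⟨basisRepr_toQuadraticMap_of_isOrthoᵢ B b hB ▸ B.toQuadraticMap.isometryEquivBasisRepr b⟩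

end LinearMap.BilinMap

namespace AlternatingMap

variable {K V W : Type*} [Field K] [AddCommGroup V] [Module K V] [AddCommGroup W] [Module K W]
  {k : ℕ}

theorem bijective_alternatingMapLinearEquiv [FiniteDimensional K V]
    (w : V [⋀^Fin k]→ₗ[K] W) (hspan : Submodule.span K (Set.range w) = ⊤)
    (hdim : finrank K W = (finrank K V).choose k) :
    Function.Bijective (exteriorPower.alternatingMapLinearEquiv w) := by
  set f := exteriorPower.alternatingMapLinearEquiv w
  have hsurj : Function.Surjective f := by
    rw [← LinearMap.range_eq_top, eq_top_iff, ← hspan, Submodule.span_le]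
    rintro _ ⟨v, rfl⟩
    exact ⟨_, exteriorPower.alternatingMapLinearEquiv_apply_ιMulti w v⟩
  have : FiniteDimensional K W := Module.Finite.of_surjective f hsurj
  refine ⟨?_, hsurj⟩
  rwa [LinearMap.injective_iff_surjective_of_finrank_eq_finrank]
  rw [exteriorPower.finrank_eq, hdim]

theorem exists_basis_apply_eq_comp_orderEmbOfFin {I : Type*} [LinearOrder I] [Finite I]
    (w : V [⋀^Fin k]→ₗ[K] W) (hspan : Submodule.span K (Set.range w) = ⊤)
    (b : Basis I K V) (hdim : finrank K W = (finrank K V).choose k) :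
    ∃ bW : Basis {s : Finset I // s.card = k} K W,
      ∀ s, bW s = w (b ∘ s.1.orderEmbOfFin s.2) := by
  have : FiniteDimensional K V := b.finiteDimensional_of_finite
  refine ⟨((b.exteriorPower k).reindex
    (Equiv.subtypeEquivRight (q := fun s : Finset I => s.card = k) fun _ => Iff.rfl)).map
    (LinearEquiv.ofBijective _ (w.bijective_alternatingMapLinearEquiv hspan hdim)), fun s => ?_⟩
  simp only [Basis.map_apply, Basis.reindex_apply, exteriorPower.basis_apply,
    exteriorPower.ιMulti_family, LinearEquiv.ofBijective_apply,
    exteriorPower.alternatingMapLinearEquiv_apply_ιMulti]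
  rfl

end AlternatingMap

theorem Matrix.det_diagonal_submatrix_orderEmbOfFin {R I : Type*} [CommRing R] [LinearOrder I]
    {k : ℕ} (a : I → R) (s t : {s : Finset I // s.card = k}) :
    ((Matrix.diagonal a).submatrix (s.1.orderEmbOfFin s.2) (t.1.orderEmbOfFin t.2)).det =
      if s = t then ∏ x ∈ s.1, a x else 0 := by
  split_ifs with hst
  · subst hst
    rw [Matrix.submatrix_diagonal _ _ (s.1.orderEmbOfFin s.2).injective, Matrix.det_diagonal]
    conv_rhs => rw [← Finset.map_orderEmbOfFin_univ s.1 s.2, Finset.prod_map]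
    rfl
  · have hsub : ¬ s.1 ⊆ t.1 := fun h =>
      hst (Subtype.ext (Finset.eq_of_subset_of_card_le h (by rw [s.2, t.2])))
    obtain ⟨x, hxs, hxt⟩ := Finset.not_subset.mp hsub
    obtain ⟨i, rfl⟩ : x ∈ Set.range (s.1.orderEmbOfFin s.2) := by
      rwa [Finset.range_orderEmbOfFin]
    refine Matrix.det_eq_zero_of_row_eq_zero i fun j => Matrix.diagonal_apply_ne _ fun h => hxt ?_
    rw [h]
    exact Finset.orderEmbOfFin_mem t.1 t.2 j

theorem extPower_diagonal_general (K : Type*) [Field K]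
    {V W : Type*} [AddCommGroup V] [Module K V] [AddCommGroup W] [Module K W]
    (m k : ℕ) (a : Fin m → K)
    (B : LinearMap.BilinForm K V)
    (bV : Module.Basis (Fin m) K V)
    (hdiag : ∀ i j, B (bV i) (bV j) = if i = j then a i else 0)
    (B' : LinearMap.BilinForm K W) (hext : IsExteriorPower K k B B') :
    QuadraticMap.Equivalent (LinearMap.BilinMap.toQuadraticMap B')
      (QuadraticMap.weightedSumSquares K
        (fun s : {s : Finset (Fin m) // s.card = k} => ∏ i ∈ s.1, a i)) := by
  obtain ⟨hdim, w, hspan, hB'⟩ := hext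
  obtain ⟨bW, hbW⟩ := w.exists_basis_apply_eq_comp_orderEmbOfFin hspan bV hdim
  have hgram : ∀ s t, B' (bW s) (bW t) = if s = t then ∏ i ∈ s.1, a i else 0 := fun s t => by
    rw [hbW, hbW, hB', ← Matrix.det_diagonal_submatrix_orderEmbOfFin a s t]
    congr 1
    ext i j
    simp only [Matrix.of_apply, Function.comp_apply, hdiag, Matrix.submatrix_apply,
      Matrix.diagonal_apply]
  have hortho : B'.IsOrthoᵢ bW :=
    LinearMap.isOrthoᵢ_def.mpr fun s t hst => by rw [hgram, if_neg hst]
  simpa only [hgram, if_true] using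
    LinearMap.BilinMap.toQuadraticMap_equivalent_weightedSumSquares_of_isOrthoᵢ B' bW hortho

/-- If `φ ≃ ⟨a₁, ..., a_m⟩` then `Λᵏφ` is isometric to the orthogonal sum of the
one-dimensional forms `⟨a_{i₁}···a_{i_k}⟩` over all `1 ≤ i₁ < ... < i_k ≤ m`. -/
theorem extPower_diagonal (K : Type*) [Field K] (hchar : ringChar K ≠ 2)
    {V W : Type*} [AddCommGroup V] [Module K V] [AddCommGroup W] [Module K W]
    (m k : ℕ) (hk : k ≤ m) (a : Fin m → K)
    (B : LinearMap.BilinForm K V) (hsym : ∀ v w, B v w = B w v)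
    (bV : Module.Basis (Fin m) K V)
    (hdiag : ∀ i j, B (bV i) (bV j) = if i = j then a i else 0)
    (B' : LinearMap.BilinForm K W) (hext : IsExteriorPower K k B B') :
    QuadraticMap.Equivalent (LinearMap.BilinMap.toQuadraticMap B')
      (QuadraticMap.weightedSumSquares K
        (fun s : {s : Finset (Fin m) // s.card = k} => ∏ i ∈ s.1, a i)) :=
  extPower_diagonal_general K m k a B bV hdiag B' hext
end

section
/- For symmetric bilinear forms φ and ψ over a field K of characteristic ≠ 2 and k ∈ ℕ, the exterior power of an orthogonal sum decomposes as Λᵏ(φ ⊥ ψ) ≃ ⊥_{i+j=k} Λⁱφ ⊗ Λʲψ. -/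
/-!
Fix bases of `V` and `W`. A spanning wedge map into a space of dimension `C(n, k)` sends the
`k`-subsets of a basis, each listed in any fixed order, to a basis; so every exterior power in
sight has a basis of wedges of basis vectors, with Gram determinants as the values of the form.
A `k`-subset of the combined basis of `V × W` is an `i`-subset of the basis of `V` together with
a `(k - i)`-subset of that of `W`; list it as the first part followed by the second. Since `V`
and `W` are orthogonal, the Gram matrix of two such lists is block diagonal with blocks of sizes
`i × i'` and `(k - i) × (k - i')`. For `i = i'` its determinant is the product of the two Gram
determinants, which is the value of `Λⁱφ ⊗ Λᵏ⁻ⁱψ` on the corresponding basis tensors; for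
`i ≠ i'` a block is not square and the determinant vanishes, as the form on the orthogonal sum
`⊥ᵢ Λⁱφ ⊗ Λᵏ⁻ⁱψ` does between distinct summands. Matching the two bases gives the isometry.
-/

open TensorProduct

open Module

namespace Matrix

variable {l m₁ m₂ n₁ n₂ R : Type*} [CommRing R] [Fintype l] [DecidableEq l]

theorem det_eq_zero_of_card_lt (M : Matrix l l R) {s t : Finset l} (hst : s.card < t.card)
    (hM : ∀ a ∉ s, ∀ b ∈ t, M a b = 0) : M.det = 0 := by
  refine (det_apply M).trans (Finset.sum_eq_zero fun σ _ => ?_)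
  obtain ⟨b, hbt, hσb⟩ : ∃ b ∈ t, σ b ∉ s := by
    by_contra! h
    exact hst.not_ge (Finset.card_le_card_of_injOn σ h σ.injective.injOn)
  rw [Finset.prod_eq_zero (f := fun i => M (σ i) i) (Finset.mem_univ b) (hM _ hσb b hbt),
    smul_zero]

variable [Fintype m₁] [Fintype n₁]

theorem det_submatrix_fromBlocks_zero_of_card_lt (A : Matrix m₁ n₁ R) (D : Matrix m₂ n₂ R)
    (e : l ≃ m₁ ⊕ m₂) (e' : l ≃ n₁ ⊕ n₂) (hcard : Fintype.card m₁ < Fintype.card n₁) :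
    ((fromBlocks A 0 0 D).submatrix e e').det = 0 := by
  refine det_eq_zero_of_card_lt _ (s := Finset.univ.map (.trans .inl e.symm.toEmbedding))
    (t := Finset.univ.map (.trans .inl e'.symm.toEmbedding)) (by simpa using hcard) ?_
  intro a ha b hb
  obtain ⟨x, -, rfl⟩ := Finset.mem_map.1 hb
  cases hy : e a with
  | inl y => exact absurd (Finset.mem_map.2 ⟨y, Finset.mem_univ _, by simp [← hy]⟩) ha
  | inr y => simp [hy]

theorem det_submatrix_fromBlocks_zero_of_card_ne [Fintype m₂] [Fintype n₂]
    (A : Matrix m₁ n₁ R) (D : Matrix m₂ n₂ R) (e : l ≃ m₁ ⊕ m₂) (e' : l ≃ n₁ ⊕ n₂)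
    (hcard : Fintype.card m₁ ≠ Fintype.card n₁) :
    ((fromBlocks A 0 0 D).submatrix e e').det = 0 := by
  rcases hcard.lt_or_gt with h | h
  · exact det_submatrix_fromBlocks_zero_of_card_lt A D e e' h
  · have hl := (Fintype.card_congr e).symm.trans (Fintype.card_congr e')
    rw [Fintype.card_sum, Fintype.card_sum] at hl
    rw [← fromBlocks_submatrix_sum_swap_sum_swap, submatrix_submatrix]
    exact det_submatrix_fromBlocks_zero_of_card_lt D A (e.trans (Equiv.sumComm _ _))
      (e'.trans (Equiv.sumComm _ _)) (by omega)

end Matrix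

theorem Function.Injective.exists_perm_comp_eq_of_range_eq {ι κ : Type*} {r r' : ι → κ}
    (hr : Function.Injective r) (hr' : Function.Injective r')
    (h : Set.range r = Set.range r') : ∃ σ : Equiv.Perm ι, r' ∘ σ = r :=
  ⟨(Equiv.ofInjective r hr).trans ((Equiv.setCongr h).trans (Equiv.ofInjective r' hr').symm),
    funext fun a => by simp [Equiv.apply_ofInjective_symm]⟩

namespace AlternatingMap

variable {R V W ι κ J : Type*} [CommRing R] [AddCommGroup V] [Module R V] [AddCommGroup W]
  [Module R W] [Fintype ι] [DecidableEq ι]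
  (w : V [⋀^ι]→ₗ[R] W) (b : Basis κ R V) {f : J → ι → κ}

theorem map_basis_comp_mem_span (hf_inj : ∀ j, Function.Injective (f j))
    (hf : ∀ U : Finset κ, U.card = Fintype.card ι → ∃ j, Set.range (f j) = U)
    (r : ι → κ) : w (b ∘ r) ∈ Submodule.span R (Set.range fun j => w (b ∘ f j)) := by
  classical
  by_cases hr : Function.Injective r
  · obtain ⟨j, hj⟩ := hf (Finset.univ.image r) (Finset.card_image_of_injective _ hr)
    obtain ⟨σ, rfl⟩ := hr.exists_perm_comp_eq_of_range_eq (hf_inj j) (by simp [hj])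
    rw [← Function.comp_assoc, map_perm, Units.smul_def]
    exact zsmul_mem (Submodule.subset_span (Set.mem_range_self (f := fun j => w (b ∘ f j)) j)) _
  · obtain ⟨a, a', hrr, hne⟩ := Function.not_injective_iff.1 hr
    rw [w.map_eq_zero_of_eq _ (congrArg b hrr) hne]
    exact zero_mem _

theorem span_range_basis_comp [Fintype κ] (hw : Submodule.span R (Set.range w) = ⊤)
    (hf_inj : ∀ j, Function.Injective (f j))
    (hf : ∀ U : Finset κ, U.card = Fintype.card ι → ∃ j, Set.range (f j) = U) :
    Submodule.span R (Set.range fun j => w (b ∘ f j)) = ⊤ := by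
  classical
  refine eq_top_iff.2 (hw.symm.le.trans (Submodule.span_le.2 ?_))
  rintro _ ⟨v, rfl⟩
  have hv : w v = ∑ r : ι → κ, (∏ a, b.repr (v a) (r a)) • w (b ∘ r) :=
    calc w v = w fun a => ∑ j, b.repr (v a) j • b j := by simp only [b.sum_repr]
      _ = ∑ r : ι → κ, w fun a => b.repr (v a) (r a) • b (r a) := w.toMultilinearMap.map_sum _
      _ = _ := by simp only [map_smul_univ]; rfl
  rw [hv]
  exact Submodule.sum_mem _ fun r _ =>
    Submodule.smul_mem _ _ (map_basis_comp_mem_span w b hf_inj hf r)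

end AlternatingMap

def finSumSubEquiv {k : ℕ} (i : Fin (k + 1)) : Fin k ≃ Fin i ⊕ Fin (k - i) :=
  (finCongr (Nat.add_sub_of_le i.is_le).symm).trans finSumFinEquiv.symm

/-- The `k`-subsets of `α ⊕ β`, each recorded as an `i`-subset of `α` and a `(k - i)`-subset
of `β`. -/
abbrev SplitSubset (α β : Type*) (k : ℕ) :=
  Σ i : Fin (k + 1), {S : Finset α // S.card = i} × {T : Finset β // T.card = k - i}

namespace SplitSubset

variable {α β : Type*} {k : ℕ}

theorem card [Fintype α] [Fintype β] :
    Fintype.card (SplitSubset α β k) = (Fintype.card α + Fintype.card β).choose k := by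
  simp only [Fintype.card_sigma, Fintype.card_prod, Fintype.card_finset_len, Nat.add_choose_eq,
    Finset.Nat.sum_antidiagonal_eq_sum_range_succ_mk]
  exact Fin.sum_univ_eq_sum_range
    (fun i => (Fintype.card α).choose i * (Fintype.card β).choose (k - i)) (k + 1)

variable [LinearOrder α] [LinearOrder β]

def enum (p : SplitSubset α β k) : Fin k → α ⊕ β :=
  Sum.elim (Sum.inl ∘ p.2.1.1.orderEmbOfFin p.2.1.2) (Sum.inr ∘ p.2.2.1.orderEmbOfFin p.2.2.2) ∘
    finSumSubEquiv p.1

theorem enum_injective (p : SplitSubset α β k) : Function.Injective p.enum :=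
  ((Sum.inl_injective.comp (Finset.orderEmbOfFin _ _).injective).sumElim
    (Sum.inr_injective.comp (Finset.orderEmbOfFin _ _).injective) (by simp)).comp
    (Equiv.injective _)

theorem exists_range_enum_eq (U : Finset (α ⊕ β)) (hU : U.card = k) :
    ∃ p : SplitSubset α β k, Set.range p.enum = U := by
  have hcard := U.card_toLeft_add_card_toRight
  refine ⟨⟨⟨U.toLeft.card, by omega⟩, ⟨U.toLeft, rfl⟩, ⟨U.toRight, by simp; omega⟩⟩, ?_⟩
  rw [enum, EquivLike.range_comp, Set.Sum.elim_range, Set.range_comp, Set.range_comp,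
    Finset.range_orderEmbOfFin, Finset.range_orderEmbOfFin]
  ext (x | x) <;> simp

end SplitSubset

namespace LinearMap.BilinForm

def gram {R M m n : Type*} [CommSemiring R] [AddCommMonoid M] [Module R M]
    (B : LinearMap.BilinForm R M) (x : m → M) (y : n → M) : Matrix m n R :=
  Matrix.of fun a b => B (x a) (y b)

variable {K V W α β : Type*} [Field K] [AddCommGroup V] [Module K V] [AddCommGroup W]
  [Module K W] {B : LinearMap.BilinForm K V} {C : LinearMap.BilinForm K W}
  {Bsum : LinearMap.BilinForm K (V × W)}

theorem gram_sumElim_inl_inr (hBsum : ∀ p q : V × W, Bsum p q = B p.1 q.1 + C p.2 q.2)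
    {m₁ m₂ n₁ n₂ : Type*} (x : m₁ → V) (y : m₂ → W) (x' : n₁ → V) (y' : n₂ → W) :
    Bsum.gram (Sum.elim (LinearMap.inl K V W ∘ x) (LinearMap.inr K V W ∘ y))
        (Sum.elim (LinearMap.inl K V W ∘ x') (LinearMap.inr K V W ∘ y')) =
      Matrix.fromBlocks (B.gram x x') 0 0 (C.gram y y') := by
  ext (a | a) (b | b) <;> simp [gram, hBsum]

variable [LinearOrder α] [LinearOrder β] {k : ℕ}

theorem gram_prod_enum (hBsum : ∀ p q : V × W, Bsum p q = B p.1 q.1 + C p.2 q.2)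
    (bV : Basis α K V) (bW : Basis β K W) (p q : SplitSubset α β k) :
    Bsum.gram (bV.prod bW ∘ p.enum) (bV.prod bW ∘ q.enum) =
      Matrix.submatrix (Matrix.fromBlocks
          (B.gram (bV ∘ p.2.1.1.orderEmbOfFin p.2.1.2) (bV ∘ q.2.1.1.orderEmbOfFin q.2.1.2)) 0 0
          (C.gram (bW ∘ p.2.2.1.orderEmbOfFin p.2.2.2) (bW ∘ q.2.2.1.orderEmbOfFin q.2.2.2)))
        (finSumSubEquiv p.1) (finSumSubEquiv q.1) := by
  rw [← gram_sumElim_inl_inr hBsum]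
  ext a b
  simp only [gram, SplitSubset.enum, Matrix.of_apply, Matrix.submatrix_apply, Function.comp_apply]
  rcases finSumSubEquiv p.1 a with _ | _ <;> rcases finSumSubEquiv q.1 b with _ | _ <;> simp

theorem det_gram_prod_enum_of_ne (hBsum : ∀ p q : V × W, Bsum p q = B p.1 q.1 + C p.2 q.2)
    (bV : Basis α K V) (bW : Basis β K W) {p q : SplitSubset α β k} (h : p.1 ≠ q.1) :
    (Bsum.gram (bV.prod bW ∘ p.enum) (bV.prod bW ∘ q.enum)).det = 0 := by
  rw [gram_prod_enum hBsum]
  exact Matrix.det_submatrix_fromBlocks_zero_of_card_ne _ _ _ _ (by simpa [Fin.val_ne_iff] using h)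

theorem det_gram_prod_enum_mk (hBsum : ∀ p q : V × W, Bsum p q = B p.1 q.1 + C p.2 q.2)
    (bV : Basis α K V) (bW : Basis β K W) (i : Fin (k + 1)) (S S' : {S : Finset α // S.card = i})
    (T T' : {T : Finset β // T.card = k - i}) :
    (Bsum.gram (bV.prod bW ∘ SplitSubset.enum ⟨i, S, T⟩)
        (bV.prod bW ∘ SplitSubset.enum ⟨i, S', T'⟩)).det =
      (B.gram (bV ∘ S.1.orderEmbOfFin S.2) (bV ∘ S'.1.orderEmbOfFin S'.2)).det *
        (C.gram (bW ∘ T.1.orderEmbOfFin T.2) (bW ∘ T'.1.orderEmbOfFin T'.2)).det := by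
  rw [gram_prod_enum hBsum, Matrix.det_submatrix_equiv_self, Matrix.det_fromBlocks_zero₂₁]

end LinearMap.BilinForm

namespace IsExteriorPower

open LinearMap.BilinForm

variable {K V W Z κ J α β : Type*} [Field K] [AddCommGroup V] [Module K V] [AddCommGroup W]
  [Module K W] [AddCommGroup Z] [Module K Z] {k : ℕ}

theorem exists_basis_gram {B : LinearMap.BilinForm K V} {B' : LinearMap.BilinForm K W}
    (h : IsExteriorPower K k B B') [Fintype κ] (b : Basis κ K V) [Fintype J]
    (f : J → Fin k → κ) (hf_inj : ∀ j, Function.Injective (f j))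
    (hf : ∀ U : Finset κ, U.card = k → ∃ j, Set.range (f j) = U)
    (hcard : Fintype.card J = (Fintype.card κ).choose k) :
    ∃ c : Basis J K W, ∀ j j', B' (c j) (c j') = (B.gram (b ∘ f j) (b ∘ f j')).det := by
  obtain ⟨hdim, w, hw, hB'⟩ := h
  have hspan := w.span_range_basis_comp b hw hf_inj (by simpa using hf)
  refine ⟨basisOfTopLeSpanOfCardEqFinrank _ hspan.ge ?_, fun j j' => ?_⟩
  · rw [hcard, hdim, finrank_eq_card_basis b]
  · simp only [coe_basisOfTopLeSpanOfCardEqFinrank, hB']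
    rfl

theorem exists_basis_gram_orderEmbOfFin {B : LinearMap.BilinForm K V}
    {B' : LinearMap.BilinForm K W} (h : IsExteriorPower K k B B') [Fintype κ] [LinearOrder κ]
    (b : Basis κ K V) :
    ∃ c : Basis {S : Finset κ // S.card = k} K W, ∀ S S', B' (c S) (c S') =
      (B.gram (b ∘ S.1.orderEmbOfFin S.2) (b ∘ S'.1.orderEmbOfFin S'.2)).det :=
  h.exists_basis_gram b _ (fun S => (S.1.orderEmbOfFin S.2).injective)
    (fun U hU => ⟨⟨U, hU⟩, Finset.range_orderEmbOfFin U hU⟩) (Fintype.card_finset_len k)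

theorem exists_basis_gram_splitSubset {Bsum : LinearMap.BilinForm K (V × W)}
    {G : LinearMap.BilinForm K Z} (h : IsExteriorPower K k Bsum G) [Fintype α] [Fintype β]
    [LinearOrder α] [LinearOrder β] (bV : Basis α K V) (bW : Basis β K W) :
    ∃ c : Basis (SplitSubset α β k) K Z, ∀ p q, G (c p) (c q) =
      (Bsum.gram (bV.prod bW ∘ p.enum) (bV.prod bW ∘ q.enum)).det :=
  h.exists_basis_gram (bV.prod bW) _ SplitSubset.enum_injective SplitSubset.exists_range_enum_eq
    (by rw [SplitSubset.card, Fintype.card_sum])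

end IsExteriorPower

namespace LinearMap.BilinMap

section Pi

variable {R N ι : Type*} {M : ι → Type*} [CommSemiring R] [AddCommMonoid N] [Module R N]
  [∀ i, AddCommMonoid (M i)] [∀ i, Module R (M i)] [Fintype ι]

def pi (B : ∀ i, LinearMap.BilinMap R (M i) N) : LinearMap.BilinMap R (∀ i, M i) N :=
  ∑ i, (B i).compl₁₂ (LinearMap.proj i) (LinearMap.proj i)

theorem pi_apply (B : ∀ i, LinearMap.BilinMap R (M i) N) (x y : ∀ i, M i) :
    pi B x y = ∑ i, B i (x i) (y i) := by
  simp [pi]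

theorem toQuadraticMap_pi (B : ∀ i, LinearMap.BilinMap R (M i) N) :
    (pi B).toQuadraticMap = QuadraticMap.pi fun i => (B i).toQuadraticMap := by
  ext x
  simp [pi_apply]

variable [DecidableEq ι]

theorem pi_single_single (B : ∀ i, LinearMap.BilinMap R (M i) N) (i : ι) (x y : M i) :
    pi B (Pi.single i x) (Pi.single i y) = B i x y := by
  rw [pi_apply, Fintype.sum_eq_single i fun j hj => by simp [hj]]
  simp

theorem pi_single_single_of_ne (B : ∀ i, LinearMap.BilinMap R (M i) N) {i j : ι} (h : i ≠ j)
    (x : M i) (y : M j) : pi B (Pi.single i x) (Pi.single j y) = 0 := by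
  refine (pi_apply B _ _).trans (Finset.sum_eq_zero fun l _ => ?_)
  obtain rfl | hl := eq_or_ne l i
  · simp [h]
  · simp [hl]

end Pi

theorem equivalent_toQuadraticMap_of_compl₁₂_eq {R M M' N : Type*} [CommSemiring R]
    [AddCommMonoid M] [Module R M] [AddCommMonoid M'] [Module R M'] [AddCommMonoid N]
    [Module R N] {B : LinearMap.BilinMap R M N} {B' : LinearMap.BilinMap R M' N}
    (f : M ≃ₗ[R] M') (h : B'.compl₁₂ (f : M →ₗ[R] M') (f : M →ₗ[R] M') = B) :
    B.toQuadraticMap.Equivalent B'.toQuadraticMap :=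
  ⟨{ f with map_app' := fun x => by rw [← h]; rfl }⟩

end LinearMap.BilinMap

theorem extPower_orthogonal_sum_general (K : Type*) [Field K]
    {V W : Type*} [AddCommGroup V] [Module K V] [AddCommGroup W] [Module K W]
    [FiniteDimensional K V] [FiniteDimensional K W] (k : ℕ)
    (B : LinearMap.BilinForm K V)
    (C : LinearMap.BilinForm K W)
    (Bsum : LinearMap.BilinForm K (V × W))
    (hBsum : ∀ p q : V × W, Bsum p q = B p.1 q.1 + C p.2 q.2)
    (X : Fin (k + 1) → Type*) [∀ i, AddCommGroup (X i)] [∀ i, Module K (X i)]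
    (E : ∀ i, LinearMap.BilinForm K (X i))
    (hE : ∀ i : Fin (k + 1), IsExteriorPower K (i : ℕ) B (E i))
    (Y : Fin (k + 1) → Type*) [∀ i, AddCommGroup (Y i)] [∀ i, Module K (Y i)]
    (F : ∀ i, LinearMap.BilinForm K (Y i))
    (hF : ∀ i : Fin (k + 1), IsExteriorPower K (k - (i : ℕ)) C (F i))
    {Z : Type*} [AddCommGroup Z] [Module K Z]
    (G : LinearMap.BilinForm K Z) (hG : IsExteriorPower K k Bsum G) :
    QuadraticMap.Equivalent (LinearMap.BilinMap.toQuadraticMap G)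
      (QuadraticMap.pi fun i : Fin (k + 1) =>
        LinearMap.BilinMap.toQuadraticMap (LinearMap.BilinForm.tmul (E i) (F i))) := by
  classical
  let bV := finBasis K V
  let bW := finBasis K W
  choose bX hbX using fun i => (hE i).exists_basis_gram_orderEmbOfFin bV
  choose bY hbY using fun i => (hF i).exists_basis_gram_orderEmbOfFin bW
  obtain ⟨bZ, hbZ⟩ := hG.exists_basis_gram_splitSubset bV bW
  let bXY := Pi.basis fun i => (bX i).tensorProduct (bY i)
  rw [← LinearMap.BilinMap.toQuadraticMap_pi]
  refine (LinearMap.BilinMap.equivalent_toQuadraticMap_of_compl₁₂_eq (bXY.equiv bZ (.refl _))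
    (LinearMap.ext_basis bXY bXY fun p q => ?_)).symm
  obtain ⟨i, S, T⟩ := p
  obtain ⟨j, S', T'⟩ := q
  rw [LinearMap.compl₁₂_apply, LinearEquiv.coe_coe, Basis.equiv_apply, Basis.equiv_apply,
    Equiv.refl_apply, Equiv.refl_apply, hbZ]
  simp only [bXY, Pi.basis_apply, Basis.tensorProduct_apply]
  obtain rfl | hij := eq_or_ne i j
  · rw [LinearMap.BilinMap.pi_single_single, LinearMap.BilinForm.tensorDistrib_tmul, hbX, hbY,
      LinearMap.BilinForm.det_gram_prod_enum_mk hBsum, smul_eq_mul, mul_comm]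
  · rw [LinearMap.BilinMap.pi_single_single_of_ne _ hij,
      LinearMap.BilinForm.det_gram_prod_enum_of_ne hBsum _ _ hij]

/-- `Λᵏ(φ ⊥ ψ) ≃ ⊥_{i+j=k} Λⁱφ ⊗ Λʲψ`. -/
theorem extPower_orthogonal_sum (K : Type*) [Field K] (hchar : ringChar K ≠ 2)
    {V W : Type*} [AddCommGroup V] [Module K V] [AddCommGroup W] [Module K W]
    [FiniteDimensional K V] [FiniteDimensional K W] (k : ℕ)
    (B : LinearMap.BilinForm K V) (hBsym : ∀ v v', B v v' = B v' v)
    (C : LinearMap.BilinForm K W) (hCsym : ∀ w w', C w w' = C w' w)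
    (Bsum : LinearMap.BilinForm K (V × W))
    (hBsum : ∀ p q : V × W, Bsum p q = B p.1 q.1 + C p.2 q.2)
    (X : Fin (k + 1) → Type*) [∀ i, AddCommGroup (X i)] [∀ i, Module K (X i)]
    (E : ∀ i, LinearMap.BilinForm K (X i))
    (hE : ∀ i : Fin (k + 1), IsExteriorPower K (i : ℕ) B (E i))
    (Y : Fin (k + 1) → Type*) [∀ i, AddCommGroup (Y i)] [∀ i, Module K (Y i)]
    (F : ∀ i, LinearMap.BilinForm K (Y i))
    (hF : ∀ i : Fin (k + 1), IsExteriorPower K (k - (i : ℕ)) C (F i))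
    {Z : Type*} [AddCommGroup Z] [Module K Z]
    (G : LinearMap.BilinForm K Z) (hG : IsExteriorPower K k Bsum G) :
    QuadraticMap.Equivalent (LinearMap.BilinMap.toQuadraticMap G)
      (QuadraticMap.pi fun i : Fin (k + 1) =>
        LinearMap.BilinMap.toQuadraticMap (LinearMap.BilinForm.tmul (E i) (F i))) :=
  extPower_orthogonal_sum_general K k B C Bsum hBsum X E hE Y F hF G hG
end

section
/- Let K be a field of characteristic ≠ 2, h a positive integer, and k odd with 1 ≤ k ≤ 2h-1. Then the k-fold exterior power of h × H (h hyperbolic planes) is hyperbolic: Λᵏ(h × H) ≃ (1/2)·C(2h, k) × H. -/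
/-!
The basis vectors `e p` of `h × H` are orthogonal with norms `±1`, so by the determinant formula
the wedges `e_S` over the `k`-subsets `S` form an orthogonal basis of the exterior power, with
norms `(-1) ^ m(S)`, where `m(S)` counts the vectors of negative norm in `S`. Exchanging the two
vectors of every hyperbolic pair is an involution on `k`-subsets turning `m` into `k - m`; as `k`
is odd it exchanges the two signs, so each of them occurs `C(2h, k) / 2` times.
-/

open Finset
open LinearMap (BilinForm)

theorem Function.Involutive.exists_equiv_fin_prod_fin_two {α : Type*} [Fintype α] {F : α → α}
    (hF : Function.Involutive F) (p : α → Prop) [DecidablePred p] (hp : ∀ a, p (F a) ↔ ¬ p a) :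
    ∃ σ : α ≃ Fin (Fintype.card α / 2) × Fin 2, ∀ a, (σ a).2 = 0 ↔ p a := by
  let swap : {a // p a} ≃ {a // ¬ p a} :=
    (hF.toPerm F).subtypeEquiv fun a => by rw [Function.Involutive.coe_toPerm, hp, not_not]
  have hcard : Fintype.card {a // p a} = Fintype.card α / 2 := by
    have := Fintype.card_subtype_compl p
    have := Fintype.card_subtype_le p
    rw [← Fintype.card_congr swap] at *
    omega
  let e := Fintype.equivFinOfCardEq hcard
  refine ⟨(Equiv.sumCompl p).symm.trans <| (Equiv.sumCongr e (swap.symm.trans e)).trans <|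
    (Equiv.boolProdEquivSum _).symm.trans <| (Equiv.prodComm _ _).trans <|
      Equiv.prodCongr (.refl _) finTwoEquiv.symm, fun a => ?_⟩
  by_cases ha : p a <;>
    simp [ha, Equiv.sumCompl_symm_apply_of_pos, Equiv.sumCompl_symm_apply_of_neg] <;> decide

namespace QuadraticMap

theorem weightedSumSquares_comp_equiv_equivalent {R ι κ : Type*} [CommRing R] [Fintype ι]
    [Fintype κ] (σ : ι ≃ κ) (w : κ → R) :
    (weightedSumSquares R (w ∘ σ)).Equivalent (weightedSumSquares R w) := by
  have hcomp : (weightedSumSquares R w).comp (LinearEquiv.piCongrLeft' R (fun _ => R) σ).toLinearMap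
      = weightedSumSquares R (w ∘ σ) := by
    ext x
    simp only [comp_apply, weightedSumSquares_apply, LinearEquiv.coe_coe,
      LinearEquiv.piCongrLeft'_apply]
    exact (σ.sum_comp fun j => w j • (x (σ.symm j) * x (σ.symm j))).symm.trans (by simp)
  exact ⟨(hcomp ▸ isometryEquivOfCompLinearEquiv _ _).symm⟩

end QuadraticMap

namespace LinearMap.BilinForm

variable {R M ι : Type*} [CommRing R] [AddCommGroup M] [Module R M]

theorem toQuadraticMap_equivalent_weightedSumSquares [Fintype ι] (B : BilinForm R M)
    (v : Module.Basis ι R M) (hv : B.iIsOrtho v) :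
    (BilinMap.toQuadraticMap B).Equivalent
      (QuadraticMap.weightedSumSquares R fun i => B (v i) (v i)) := by
  have : (BilinMap.toQuadraticMap B).basisRepr v =
      QuadraticMap.weightedSumSquares R fun i => B (v i) (v i) := by
    ext x
    simp only [QuadraticMap.basisRepr_apply, BilinMap.toQuadraticMap_apply,
      QuadraticMap.weightedSumSquares_apply, sum_left, sum_right, smul_left, smul_right,
      smul_eq_mul]
    refine sum_congr rfl fun i _ => ?_
    rw [sum_eq_single i (fun j _ hji => by rw [hv hji, mul_zero]) (by simp)]
    ring
  exact ⟨this ▸ QuadraticMap.isometryEquivBasisRepr _ v⟩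

theorem gram_eq_diagonal [DecidableEq ι] {B : BilinForm R M} {b : ι → M} (hb : B.iIsOrtho b) :
    Matrix.of (fun i j => B (b i) (b j)) = Matrix.diagonal fun i => B (b i) (b i) := by
  ext i j
  by_cases hij : i = j
  · simp [hij]
  · simp [hij, hb hij]

variable {W : Type*} [AddCommGroup W] [Module R W] {k : ℕ}

noncomputable def wedgeOfSubset (w : AlternatingMap R M W (Fin k)) (b : ι → M)
    (s : {s : Finset ι // #s = k}) : W :=
  w fun i => b ((s.1.equivFinOfCardEq s.2).symm i)

variable {B : BilinForm R M} {B' : BilinForm R W} {b : ι → M}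
  {w : AlternatingMap R M W (Fin k)}

theorem iIsOrtho_wedgeOfSubset
    (hw : ∀ v u : Fin k → M, B' (w v) (w u) = (Matrix.of fun i j => B (v i) (u j)).det)
    (hb : B.iIsOrtho b) : B'.iIsOrtho (wedgeOfSubset w b) := by
  intro s t hst
  obtain ⟨x, hxs, hxt⟩ : ∃ x ∈ s.1, x ∉ t.1 := not_subset.mp fun hsub =>
    hst (Subtype.ext (eq_of_subset_of_card_le hsub (t.2.trans s.2.symm).le))
  refine (hw _ _).trans (Matrix.det_eq_zero_of_row_eq_zero (s.1.equivFinOfCardEq s.2 ⟨x, hxs⟩)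
    fun j => ?_)
  rw [Matrix.of_apply, Equiv.symm_apply_apply]
  exact hb fun hxj : x = _ => hxt (hxj ▸ Subtype.property _)

theorem wedgeOfSubset_self [DecidableEq ι]
    (hw : ∀ v u : Fin k → M, B' (w v) (w u) = (Matrix.of fun i j => B (v i) (u j)).det)
    (hb : B.iIsOrtho b) (s : {s : Finset ι // #s = k}) :
    B' (wedgeOfSubset w b s) (wedgeOfSubset w b s) = ∏ i ∈ s.1, B (b i) (b i) := by
  let f : Fin k → ι := fun i => (s.1.equivFinOfCardEq s.2).symm i
  have hf : Function.Injective f :=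
    Subtype.val_injective.comp (s.1.equivFinOfCardEq s.2).symm.injective
  change B' (w (b ∘ f)) (w (b ∘ f)) = _
  rw [hw, show Matrix.of (fun i j => B ((b ∘ f) i) ((b ∘ f) j)) =
    (Matrix.of fun i j => B (b i) (b j)).submatrix f f from rfl, gram_eq_diagonal hb,
    Matrix.submatrix_diagonal _ _ hf, Matrix.det_diagonal, ← prod_coe_sort s.1]
  exact (s.1.equivFinOfCardEq s.2).symm.prod_comp fun i : s.1 => B (b i) (b i)

end LinearMap.BilinForm

section HyperbolicPairs

variable {α : Type*}

def swapPairs : Equiv.Perm (α × Fin 2) := Equiv.prodCongr (.refl α) Fin.revPerm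

theorem swapPairs_apply (p : α × Fin 2) : swapPairs p = (p.1, p.2.rev) := rfl

theorem even_card_filter_map_swapPairs_iff {s : Finset (α × Fin 2)} (hs : Odd #s) :
    Even #((s.map swapPairs.toEmbedding).filter (·.2 ≠ 0)) ↔ ¬ Even #(s.filter (·.2 ≠ 0)) := by
  have hswap : #((s.map swapPairs.toEmbedding).filter (·.2 ≠ 0)) = #(s.filter (¬ ·.2 ≠ 0)) := by
    rw [filter_map, card_map]
    congr 2
    ext ⟨a, i⟩
    simp only [Function.comp_apply, Equiv.coe_toEmbedding, swapPairs_apply, ne_eq, not_not]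
    fin_cases i <;> decide
  have := card_filter_add_card_filter_not (s := s) (fun p => p.2 ≠ 0)
  rw [Nat.odd_iff] at hs
  simp only [Nat.even_iff]
  omega

theorem prod_sign_eq_neg_one_pow {R : Type*} [CommRing R] (s : Finset (α × Fin 2)) :
    ∏ p ∈ s, (if p.2 = 0 then (1 : R) else -1) = (-1) ^ #(s.filter (·.2 ≠ 0)) := by
  rw [prod_ite, prod_const_one, prod_const, one_mul]

theorem exists_equiv_fin_prod_fin_two_even_card_filter [Fintype α] {k : ℕ} (hk : Odd k) :
    ∃ σ : {s : Finset (α × Fin 2) // #s = k} ≃ Fin ((2 * Fintype.card α).choose k / 2) × Fin 2,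
      ∀ s, (σ s).2 = 0 ↔ Even #(s.1.filter (·.2 ≠ 0)) := by
  let F (s : {s : Finset (α × Fin 2) // #s = k}) : {s : Finset (α × Fin 2) // #s = k} :=
    ⟨s.1.map swapPairs.toEmbedding, (card_map _).trans s.2⟩
  have hF : Function.Involutive F := fun s => by
    ext ⟨a, i⟩
    simp [F, swapPairs]
  have := hF.exists_equiv_fin_prod_fin_two (fun s => Even #(s.1.filter (·.2 ≠ 0)))
    fun s => even_card_filter_map_swapPairs_iff (by rwa [s.2])
  rwa [Fintype.card_finset_len, Fintype.card_prod, Fintype.card_fin, mul_comm] at this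

end HyperbolicPairs

theorem extPower_hyperbolic_odd_general (K : Type*) [Field K]
    {V W : Type*} [AddCommGroup V] [Module K V] [AddCommGroup W] [Module K W]
    (h k : ℕ) (hkodd : Odd k) (hk2 : k ≤ 2 * h - 1)
    (B : LinearMap.BilinForm K V) (bV : Module.Basis (Fin h × Fin 2) K V)
    (hdiag : ∀ p q, B (bV p) (bV q) =
      if p = q then (if p.2 = 0 then (1 : K) else -1) else 0)
    (B' : LinearMap.BilinForm K W) (hext : IsExteriorPower K k B B') :
    QuadraticMap.Equivalent (LinearMap.BilinMap.toQuadraticMap B')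
      (QuadraticMap.weightedSumSquares K
        (fun p : Fin ((2 * h).choose k / 2) × Fin 2 => if p.2 = 0 then (1 : K) else -1)) := by
  obtain ⟨hdim, w, -, hw⟩ := hext
  have hb : B.iIsOrtho bV := BilinForm.iIsOrtho_def.mpr fun p q hpq => by simp [hdiag, hpq]
  have hnorm (s : {s : Finset (Fin h × Fin 2) // #s = k}) :
      B' (BilinForm.wedgeOfSubset w bV s) (BilinForm.wedgeOfSubset w bV s) =
        (-1) ^ #(s.1.filter (·.2 ≠ 0)) := by
    rw [BilinForm.wedgeOfSubset_self hw hb]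
    simp only [hdiag, if_true, prod_sign_eq_neg_one_pow]
  have hcard : Fintype.card {s : Finset (Fin h × Fin 2) // #s = k} = (2 * h).choose k := by
    simp [Fintype.card_finset_len, mul_comm]
  have : Nonempty {s : Finset (Fin h × Fin 2) // #s = k} :=
    Fintype.card_pos_iff.mp (hcard ▸ Nat.choose_pos (by omega))
  let bW := basisOfLinearIndependentOfCardEqFinrank
    (BilinForm.linearIndependent_of_iIsOrtho (BilinForm.iIsOrtho_wedgeOfSubset hw hb)
      fun s => by simp [hnorm])
    (by rw [hcard, hdim, Module.finrank_eq_card_basis bV]; simp [mul_comm])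
  have hsplit := exists_equiv_fin_prod_fin_two_even_card_filter (α := Fin h) hkodd
  rw [Fintype.card_fin] at hsplit
  obtain ⟨σ, hσ⟩ := hsplit
  have hbW : ⇑bW = BilinForm.wedgeOfSubset w bV := coe_basisOfLinearIndependentOfCardEqFinrank _ _
  refine (BilinForm.toQuadraticMap_equivalent_weightedSumSquares B' bW
    (hbW ▸ BilinForm.iIsOrtho_wedgeOfSubset hw hb)).trans ?_
  convert QuadraticMap.weightedSumSquares_comp_equiv_equivalent σ _ using 2
  ext s
  simp [hbW, hnorm, hσ, neg_one_pow_eq_ite]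

/-- Odd exterior powers of a hyperbolic form are hyperbolic:
`Λᵏ(h × ℍ) ≃ (1/2)·C(2h,k) × ℍ` for `k` odd, `1 ≤ k ≤ 2h-1`. -/
theorem extPower_hyperbolic_odd (K : Type*) [Field K] (hchar : ringChar K ≠ 2)
    {V W : Type*} [AddCommGroup V] [Module K V] [AddCommGroup W] [Module K W]
    (h k : ℕ) (hh : 0 < h) (hkodd : Odd k) (hk1 : 1 ≤ k) (hk2 : k ≤ 2 * h - 1)
    (B : LinearMap.BilinForm K V) (bV : Module.Basis (Fin h × Fin 2) K V)
    (hdiag : ∀ p q, B (bV p) (bV q) =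
      if p = q then (if p.2 = 0 then (1 : K) else -1) else 0)
    (B' : LinearMap.BilinForm K W) (hext : IsExteriorPower K k B B') :
    QuadraticMap.Equivalent (LinearMap.BilinMap.toQuadraticMap B')
      (QuadraticMap.weightedSumSquares K
        (fun p : Fin ((2 * h).choose k / 2) × Fin 2 => if p.2 = 0 then (1 : K) else -1)) :=
  extPower_hyperbolic_odd_general K h k hkodd hk2 B bV hdiag B' hext
end

section
/- Let K be a field of characteristic ≠ 2, h a positive integer, and k = 2ℓ with 0 ≤ ℓ ≤ h. Then Λᵏ(h × H) ≃ C(h, ℓ) × ⟨(-1)^ℓ⟩ ⊥ (1/2)(C(2h, 2ℓ) - C(h, ℓ)) × H. -/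
open Finset

namespace LinearMap.BilinForm

theorem equivalent_weightedSumSquares_of_basis {R M ι : Type*} [CommRing R] [AddCommGroup M]
    [Module R M] [Fintype ι] [DecidableEq ι] (B : LinearMap.BilinForm R M)
    (b : Module.Basis ι R M) (w : ι → R)
    (hb : ∀ i j, B (b i) (b j) = if i = j then w i else 0) :
    B.toQuadraticMap.Equivalent (QuadraticMap.weightedSumSquares R w) := by
  refine ⟨{ toLinearEquiv := b.equivFun, map_app' := fun v => ?_ }⟩
  change QuadraticMap.weightedSumSquares R w (b.equivFun v) = B v v
  conv_rhs => rw [← b.sum_equivFun v]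
  simp only [sum_left, sum_right, smul_left, smul_right, hb, mul_ite, mul_zero, sum_ite_eq',
    mem_univ, if_true, QuadraticMap.weightedSumSquares_apply, smul_eq_mul]
  exact sum_congr rfl fun i _ => by ring

end LinearMap.BilinForm

theorem QuadraticMap.equivalent_weightedSumSquares_comp {R ι ι' : Type*} [CommSemiring R]
    [Fintype ι] [Fintype ι'] (w : ι → R) (σ : ι' ≃ ι) :
    (weightedSumSquares R w).Equivalent (weightedSumSquares R (w ∘ σ)) :=
  ⟨{ toLinearEquiv := LinearEquiv.funCongrLeft R R σ
     map_app' := fun x => by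
      simpa [weightedSumSquares_apply] using Equiv.sum_comp σ fun i => w i * (x i * x i) }⟩

namespace Finset

variable {ι : Type*} {k : ℕ}

noncomputable def enumOfCardEq (S : Finset ι) (hS : S.card = k) (i : Fin k) : ι :=
  (S.equivFinOfCardEq hS).symm i

theorem enumOfCardEq_mem (S : Finset ι) (hS : S.card = k) (i : Fin k) :
    S.enumOfCardEq hS i ∈ S :=
  ((S.equivFinOfCardEq hS).symm i).2

theorem enumOfCardEq_injective (S : Finset ι) (hS : S.card = k) :
    Function.Injective (S.enumOfCardEq hS) :=
  Subtype.val_injective.comp (S.equivFinOfCardEq hS).symm.injective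

theorem enumOfCardEq_equivFinOfCardEq (S : Finset ι) (hS : S.card = k) (x : S) :
    S.enumOfCardEq hS (S.equivFinOfCardEq hS x) = x := by
  simp [enumOfCardEq]

theorem prod_enumOfCardEq {M : Type*} [CommMonoid M] (S : Finset ι) (hS : S.card = k)
    (f : ι → M) :
    ∏ i, f (S.enumOfCardEq hS i) = ∏ p ∈ S, f p := by
  rw [← prod_coe_sort S]
  exact Equiv.prod_comp (S.equivFinOfCardEq hS).symm fun x : S => f x

end Finset

namespace LinearMap.BilinForm

variable {R V ι : Type*} [CommRing R] [AddCommGroup V] [Module R V] [DecidableEq ι] {k : ℕ}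

theorem det_gram_enumOfCardEq (B : LinearMap.BilinForm R V) (b : ι → V) (d : ι → R)
    (hb : ∀ p q, B (b p) (b q) = if p = q then d p else 0) (S T : {S : Finset ι // S.card = k}) :
    (Matrix.of fun i j => B (b (S.1.enumOfCardEq S.2 i)) (b (T.1.enumOfCardEq T.2 j))).det =
      if S = T then ∏ p ∈ S.1, d p else 0 := by
  split_ifs with hST
  · subst hST
    have hdiag : (Matrix.of fun i j =>
        B (b (S.1.enumOfCardEq S.2 i)) (b (S.1.enumOfCardEq S.2 j))) =
        Matrix.diagonal fun i => d (S.1.enumOfCardEq S.2 i) := by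
      ext i j
      simp [hb, Matrix.diagonal_apply, (S.1.enumOfCardEq_injective S.2).eq_iff]
    rw [hdiag, Matrix.det_diagonal, prod_enumOfCardEq]
  · obtain ⟨p, hpS, hpT⟩ := not_subset.1 fun hsub =>
      hST (Subtype.ext (eq_of_subset_of_card_le hsub (by rw [S.2, T.2])))
    apply Matrix.det_eq_zero_of_row_eq_zero (S.1.equivFinOfCardEq S.2 ⟨p, hpS⟩)
    intro j
    rw [Matrix.of_apply, enumOfCardEq_equivFinOfCardEq, hb, if_neg]
    intro hp
    exact hpT ((show p = _ from hp) ▸ T.1.enumOfCardEq_mem T.2 j)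

end LinearMap.BilinForm

namespace AlternatingMap

variable {R V W ι : Type*} [CommRing R] [AddCommGroup V] [Module R V] [AddCommGroup W]
  [Module R W] [DecidableEq ι] {k : ℕ}

noncomputable def subsetWedge (w : V [⋀^Fin k]→ₗ[R] W) (b : ι → V)
    (S : {S : Finset ι // S.card = k}) : W :=
  w fun i => b (S.1.enumOfCardEq S.2 i)

theorem map_comp_mem_span_subsetWedge (w : V [⋀^Fin k]→ₗ[R] W) (b : ι → V)
    (r : Fin k → ι) :
    w (b ∘ r) ∈ Submodule.span R (Set.range (w.subsetWedge b)) := by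
  by_cases hr : Function.Injective r
  · let S : {S : Finset ι // S.card = k} :=
      ⟨univ.image r, by simp [card_image_of_injective _ hr]⟩
    let π : Equiv.Perm (Fin k) := Equiv.ofBijective
      (fun i => S.1.equivFinOfCardEq S.2 ⟨r i, mem_image_of_mem r (mem_univ i)⟩)
      (Finite.injective_iff_bijective.1 fun i j hij => hr (by simpa using hij))
    have hperm : b ∘ r = (fun i => b (S.1.enumOfCardEq S.2 i)) ∘ π := by
      funext i
      simp [π, Finset.enumOfCardEq_equivFinOfCardEq]
    rw [hperm, w.map_perm, Units.smul_def]
    exact Submodule.smul_of_tower_mem _ _ (Submodule.subset_span ⟨S, rfl⟩)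
  · rw [w.map_eq_zero_of_not_injective _ fun h => hr h.of_comp]
    exact Submodule.zero_mem _

theorem span_range_subsetWedge [Fintype ι] (w : V [⋀^Fin k]→ₗ[R] W) (b : Module.Basis ι R V)
    (hw : Submodule.span R (Set.range w) = ⊤) :
    Submodule.span R (Set.range (w.subsetWedge b)) = ⊤ := by
  refine eq_top_iff.2 (hw ▸ Submodule.span_le.2 ?_)
  rintro _ ⟨v, rfl⟩
  have hexpand : w v = ∑ r : Fin k → ι, (∏ i, b.repr (v i) (r i)) • w (b ∘ r) := by
    conv_lhs => rw [← funext fun i => b.sum_repr (v i)]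
    exact (w.toMultilinearMap.map_sum _).trans
      (sum_congr rfl fun r _ => w.toMultilinearMap.map_smul_univ _ _)
  rw [SetLike.mem_coe, hexpand]
  exact Submodule.sum_mem _ fun r _ =>
    Submodule.smul_mem _ _ (w.map_comp_mem_span_subsetWedge b r)

end AlternatingMap

namespace IsExteriorPower

variable {K V W ι : Type*} [Field K] [AddCommGroup V] [Module K V] [AddCommGroup W] [Module K W]
  [Fintype ι] [DecidableEq ι] {k : ℕ}
  {B : LinearMap.BilinForm K V} {B' : LinearMap.BilinForm K W}

theorem exists_basis_gram_eq (hext : IsExteriorPower K k B B') (b : Module.Basis ι K V)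
    (d : ι → K) (hb : ∀ p q, B (b p) (b q) = if p = q then d p else 0) :
    ∃ c : Module.Basis {S : Finset ι // S.card = k} K W,
      ∀ S T, B' (c S) (c T) = if S = T then ∏ p ∈ S.1, d p else 0 := by
  obtain ⟨hrank, w, hspan, hdet⟩ := hext
  have hcard : Fintype.card {S : Finset ι // S.card = k} = Module.finrank K W := by
    rw [Fintype.card_finset_len, hrank, Module.finrank_eq_card_basis b]
  refine ⟨basisOfTopLeSpanOfCardEqFinrank (w.subsetWedge b)
    (w.span_range_subsetWedge b hspan).ge hcard, fun S T => ?_⟩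
  rw [coe_basisOfTopLeSpanOfCardEqFinrank, AlternatingMap.subsetWedge,
    AlternatingMap.subsetWedge, hdet]
  exact B.det_gram_enumOfCardEq b d hb S T

theorem equivalent_weightedSumSquares (hext : IsExteriorPower K k B B')
    (b : Module.Basis ι K V) (d : ι → K)
    (hb : ∀ p q, B (b p) (b q) = if p = q then d p else 0) :
    B'.toQuadraticMap.Equivalent (QuadraticMap.weightedSumSquares K
      fun S : {S : Finset ι // S.card = k} => ∏ p ∈ S.1, d p) :=
  let ⟨c, hc⟩ := hext.exists_basis_gram_eq b d hb
  B'.equivalent_weightedSumSquares_of_basis c _ hc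

end IsExteriorPower

theorem Finset.mul_prod_map_swap {α M : Type*} [DecidableEq α] [CommMonoid M] {s : Finset α}
    {a b : α} (ha : a ∈ s) (hb : b ∉ s) (f : α → M) :
    f a * ∏ x ∈ s.map (Equiv.swap a b).toEmbedding, f x = f b * ∏ x ∈ s, f x := by
  have hmap : s.map (Equiv.swap a b).toEmbedding = insert b (s.erase a) := by
    ext x
    rw [mem_map_equiv, Equiv.symm_swap, mem_insert, mem_erase]
    rcases eq_or_ne x a with rfl | hxa
    · simp [Equiv.swap_apply_left, hb, (ne_of_mem_of_not_mem ha hb)]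
    rcases eq_or_ne x b with rfl | hxb
    · simp [ha]
    · simp [Equiv.swap_apply_of_ne_of_ne hxa hxb, hxa, hxb]
  rw [hmap, prod_insert fun hb' => hb (mem_of_mem_erase hb'), mul_left_comm,
    mul_prod_erase s f ha]

namespace Hyperbolic

variable {h : ℕ}

-- The basis vectors `(i, 0)` and `(i, 1)`, of lengths `1` and `-1`, span the `i`-th copy of `ℍ`.
def basisSign (p : Fin h × Fin 2) : ℤˣ := if p.2 = 0 then 1 else -1

def sign (S : Finset (Fin h × Fin 2)) : ℤˣ := ∏ p ∈ S, basisSign p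

def IsUnionOfColumns (S : Finset (Fin h × Fin 2)) : Prop := ∀ i, (i, 0) ∈ S ↔ (i, 1) ∈ S

instance : DecidablePred (IsUnionOfColumns (h := h)) :=
  fun _ => inferInstanceAs (Decidable (∀ _, _))

def unbalancedCols (S : Finset (Fin h × Fin 2)) : Finset (Fin h) :=
  {i | ¬((i, 0) ∈ S ↔ (i, 1) ∈ S)}

theorem not_isUnionOfColumns_iff {S : Finset (Fin h × Fin 2)} :
    ¬ IsUnionOfColumns S ↔ (unbalancedCols S).Nonempty := by
  simp [IsUnionOfColumns, unbalancedCols, Finset.Nonempty]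

def colSwap (i : Fin h) : Equiv.Perm (Fin h × Fin 2) := Equiv.swap (i, 0) (i, 1)

theorem unbalancedCols_map_colSwap (S : Finset (Fin h × Fin 2)) (i : Fin h) :
    unbalancedCols (S.map (colSwap i).toEmbedding) = unbalancedCols S := by
  ext j
  simp only [unbalancedCols, mem_filter, mem_univ, true_and, mem_map_equiv, colSwap,
    Equiv.symm_swap]
  rcases eq_or_ne j i with rfl | hji
  · simp [Equiv.swap_apply_left, Equiv.swap_apply_right, Iff.comm]
  · rw [Equiv.swap_apply_of_ne_of_ne, Equiv.swap_apply_of_ne_of_ne] <;> simp [hji]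

theorem sign_map_colSwap {S : Finset (Fin h × Fin 2)} {i : Fin h} (hi : i ∈ unbalancedCols S) :
    sign (S.map (colSwap i).toEmbedding) = -sign S := by
  have hcol : ((i, 0) ∈ S ∧ (i, 1) ∉ S) ∨ ((i, 1) ∈ S ∧ (i, 0) ∉ S) := by
    simp only [unbalancedCols, mem_filter, mem_univ, true_and] at hi
    tauto
  rcases hcol with ⟨h0, h1⟩ | ⟨h1, h0⟩
  · have key := mul_prod_map_swap h0 h1 basisSign
    rw [← sign, ← sign] at key
    simpa [basisSign, colSwap] using key
  · have key := mul_prod_map_swap h1 h0 basisSign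
    rw [← sign, ← sign, Equiv.swap_comm, ← colSwap] at key
    simpa [basisSign, neg_eq_iff_eq_neg] using key

noncomputable def toggle (S : Finset (Fin h × Fin 2)) : Finset (Fin h × Fin 2) :=
  if hS : (unbalancedCols S).Nonempty then
    S.map (colSwap ((unbalancedCols S).min' hS)).toEmbedding
  else S

theorem card_toggle (S : Finset (Fin h × Fin 2)) : (toggle S).card = S.card := by
  unfold toggle
  split_ifs <;> simp

theorem unbalancedCols_toggle (S : Finset (Fin h × Fin 2)) :
    unbalancedCols (toggle S) = unbalancedCols S := by
  unfold toggle
  split_ifs <;> simp [unbalancedCols_map_colSwap]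

theorem toggle_toggle (S : Finset (Fin h × Fin 2)) : toggle (toggle S) = S := by
  have hcols := unbalancedCols_toggle S
  by_cases hS : (unbalancedCols S).Nonempty
  · have hS' : (unbalancedCols (toggle S)).Nonempty := hcols ▸ hS
    have hmin : (unbalancedCols (toggle S)).min' hS' = (unbalancedCols S).min' hS := by
      congr 1
    rw [toggle, dif_pos hS', hmin, toggle, dif_pos hS]
    ext
    simp [mem_map_equiv, colSwap]
  · have hS' : ¬(unbalancedCols (toggle S)).Nonempty := hcols ▸ hS
    rw [toggle, dif_neg hS', toggle, dif_neg hS]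

theorem sign_toggle {S : Finset (Fin h × Fin 2)} (hS : ¬ IsUnionOfColumns S) :
    sign (toggle S) = -sign S := by
  rw [not_isUnionOfColumns_iff] at hS
  rw [toggle, dif_pos hS]
  exact sign_map_colSwap (min'_mem _ _)

theorem isUnionOfColumns_toggle_iff {S : Finset (Fin h × Fin 2)} :
    IsUnionOfColumns (toggle S) ↔ IsUnionOfColumns S := by
  rw [← not_iff_not, not_isUnionOfColumns_iff, not_isUnionOfColumns_iff, unbalancedCols_toggle]

theorem eq_product_univ_of_isUnionOfColumns {S : Finset (Fin h × Fin 2)}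
    (hS : IsUnionOfColumns S) : S = S.image Prod.fst ×ˢ univ := by
  ext ⟨i, j⟩
  have hcol : ∀ j', (i, j') ∈ S ↔ (i, j) ∈ S := by
    intro j'; fin_cases j <;> fin_cases j' <;> simp [hS i]
  simp [hcol]

theorem isUnionOfColumns_product_univ (T : Finset (Fin h)) :
    IsUnionOfColumns (T ×ˢ (univ : Finset (Fin 2))) := by
  simp [IsUnionOfColumns]

theorem sign_product_univ (T : Finset (Fin h)) :
    sign (T ×ˢ (univ : Finset (Fin 2))) = (-1) ^ T.card := by
  simp [sign, prod_product, basisSign]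

theorem card_product_univ (T : Finset (Fin h)) :
    (T ×ˢ (univ : Finset (Fin 2))).card = 2 * T.card := by
  simp [card_product, mul_comm]

theorem card_image_fst_of_isUnionOfColumns {S : Finset (Fin h × Fin 2)} {ℓ : ℕ}
    (hS : IsUnionOfColumns S) (hcard : S.card = 2 * ℓ) : (S.image Prod.fst).card = ℓ := by
  rw [eq_product_univ_of_isUnionOfColumns hS, card_product_univ] at hcard
  omega

theorem sign_of_isUnionOfColumns {S : Finset (Fin h × Fin 2)} {ℓ : ℕ} (hS : IsUnionOfColumns S)
    (hcard : S.card = 2 * ℓ) : sign S = (-1) ^ ℓ := by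
  rw [eq_product_univ_of_isUnionOfColumns hS, sign_product_univ,
    card_image_fst_of_isUnionOfColumns hS hcard]

noncomputable def unionOfColumnsEquiv (ℓ : ℕ) :
    {S : {S : Finset (Fin h × Fin 2) // S.card = 2 * ℓ} // IsUnionOfColumns S.1} ≃
      {T : Finset (Fin h) // T.card = ℓ} where
  toFun S := ⟨S.1.1.image Prod.fst, card_image_fst_of_isUnionOfColumns S.2 S.1.2⟩
  invFun T :=
    ⟨⟨T.1 ×ˢ univ, by rw [card_product_univ, T.2]⟩, isUnionOfColumns_product_univ T.1⟩
  left_inv S := Subtype.ext <| Subtype.ext (eq_product_univ_of_isUnionOfColumns S.2).symm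
  right_inv T := Subtype.ext <| product_image_fst univ_nonempty

theorem card_unionOfColumns (ℓ : ℕ) :
    Fintype.card {S : {S : Finset (Fin h × Fin 2) // S.card = 2 * ℓ} // IsUnionOfColumns S.1} =
      h.choose ℓ := by
  rw [Fintype.card_congr (unionOfColumnsEquiv ℓ), Fintype.card_finset_len, Fintype.card_fin]

variable (h) in
abbrev Unbalanced (k : ℕ) :=
  {S : {S : Finset (Fin h × Fin 2) // S.card = k} // ¬ IsUnionOfColumns S.1}

noncomputable def toggleEquiv (k : ℕ) :
    {S : Unbalanced h k // sign S.1.1 = 1} ≃ {S : Unbalanced h k // sign S.1.1 ≠ 1} where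
  toFun S := ⟨⟨⟨toggle S.1.1.1, by rw [card_toggle, S.1.1.2]⟩,
    by rw [isUnionOfColumns_toggle_iff]; exact S.1.2⟩, by simp [sign_toggle S.1.2, S.2]⟩
  invFun S := ⟨⟨⟨toggle S.1.1.1, by rw [card_toggle, S.1.1.2]⟩,
    by rw [isUnionOfColumns_toggle_iff]; exact S.1.2⟩, by
      rw [sign_toggle S.1.2, Int.units_ne_iff_eq_neg.1 S.2, neg_neg]⟩
  left_inv S := Subtype.ext <| Subtype.ext <| Subtype.ext <| toggle_toggle _
  right_inv S := Subtype.ext <| Subtype.ext <| Subtype.ext <| toggle_toggle _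

noncomputable def unbalancedEquiv (k : ℕ) :
    {S : Unbalanced h k // sign S.1.1 = 1} × Fin 2 ≃ Unbalanced h k :=
  (Equiv.prodComm _ _).trans <| (Equiv.prodCongr finTwoEquiv (Equiv.refl _)).trans <|
    (Equiv.boolProdEquivSum _).trans <|
      (Equiv.sumCongr (Equiv.refl _) (toggleEquiv k)).trans (Equiv.sumCompl _)

theorem sign_unbalancedEquiv {k : ℕ} (x : {S : Unbalanced h k // sign S.1.1 = 1} × Fin 2) :
    sign (unbalancedEquiv k x).1.1 = if x.2 = 0 then 1 else -1 := by
  obtain ⟨S, j⟩ := x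
  fin_cases j
  · simp [unbalancedEquiv, finTwoEquiv, S.2]
  · simp [unbalancedEquiv, finTwoEquiv, toggleEquiv, sign_toggle S.1.2, S.2]

theorem card_unbalanced_sign_eq_one (ℓ : ℕ) :
    Fintype.card {S : Unbalanced h (2 * ℓ) // sign S.1.1 = 1} =
      ((2 * h).choose (2 * ℓ) - h.choose ℓ) / 2 := by
  have hpair := Fintype.card_congr (unbalancedEquiv (h := h) (2 * ℓ))
  have hcompl : Fintype.card (Unbalanced h (2 * ℓ)) =
      Fintype.card {S : Finset (Fin h × Fin 2) // S.card = 2 * ℓ} - h.choose ℓ := by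
    rw [← card_unionOfColumns ℓ]
    exact Fintype.card_subtype_compl _
  rw [Fintype.card_finset_len, Fintype.card_prod, Fintype.card_fin, Fintype.card_fin,
    mul_comm h] at hcompl
  rw [Fintype.card_prod, Fintype.card_fin] at hpair
  omega

theorem exists_equiv_sign (h ℓ : ℕ) :
    ∃ σ : Fin (h.choose ℓ) ⊕ Fin (((2 * h).choose (2 * ℓ) - h.choose ℓ) / 2) × Fin 2 ≃
        {S : Finset (Fin h × Fin 2) // S.card = 2 * ℓ},
      ∀ x, sign (σ x).1 =
        Sum.elim (fun _ => (-1) ^ ℓ) (fun p => if p.2 = 0 then 1 else -1) x := by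
  let eBal := (Fintype.equivFinOfCardEq (card_unionOfColumns (h := h) ℓ)).symm
  let eUnbal := (Equiv.prodCongr
    (Fintype.equivFinOfCardEq (card_unbalanced_sign_eq_one (h := h) ℓ)).symm
    (Equiv.refl (Fin 2))).trans (unbalancedEquiv (2 * ℓ))
  refine ⟨(Equiv.sumCongr eBal eUnbal).trans (Equiv.sumCompl _), ?_⟩
  rintro (i | ⟨e, j⟩)
  · simpa using sign_of_isUnionOfColumns (eBal i).2 (eBal i).1.2
  · simpa [eUnbal] using sign_unbalancedEquiv (_, j)

theorem cast_sign {K : Type*} [CommRing K] (S : Finset (Fin h × Fin 2)) :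
    ((sign S : ℤ) : K) = ∏ p ∈ S, if p.2 = 0 then 1 else -1 := by
  simp [sign, basisSign, Units.coe_prod, Int.cast_prod, apply_ite]

end Hyperbolic

theorem extPower_hyperbolic_even_general (K : Type*) [Field K]
    {V W : Type*} [AddCommGroup V] [Module K V] [AddCommGroup W] [Module K W]
    (h ℓ : ℕ)
    (B : LinearMap.BilinForm K V) (bV : Module.Basis (Fin h × Fin 2) K V)
    (hdiag : ∀ p q, B (bV p) (bV q) =
      if p = q then (if p.2 = 0 then (1 : K) else -1) else 0)
    (B' : LinearMap.BilinForm K W) (hext : IsExteriorPower K (2 * ℓ) B B') :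
    QuadraticMap.Equivalent (LinearMap.BilinMap.toQuadraticMap B')
      (QuadraticMap.weightedSumSquares K
        (Sum.elim (fun _ : Fin (h.choose ℓ) => (-1 : K) ^ ℓ)
          (fun p : Fin (((2 * h).choose (2 * ℓ) - h.choose ℓ) / 2) × Fin 2 =>
            if p.2 = 0 then (1 : K) else -1))) := by
  obtain ⟨σ, hσ⟩ := Hyperbolic.exists_equiv_sign h ℓ
  have hweights : (fun S : {S : Finset (Fin h × Fin 2) // S.card = 2 * ℓ} =>
      ∏ p ∈ S.1, if p.2 = 0 then (1 : K) else -1) ∘ σ =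
      Sum.elim (fun _ => (-1 : K) ^ ℓ) (fun p => if p.2 = 0 then 1 else -1) := by
    funext x
    rw [Function.comp_apply, ← Hyperbolic.cast_sign, hσ x]
    rcases x with i | p
    · simp
    · by_cases hp : p.2 = 0 <;> simp [hp]
  rw [← hweights]
  exact (hext.equivalent_weightedSumSquares bV _ hdiag).trans
    (QuadraticMap.equivalent_weightedSumSquares_comp _ σ)

/-- Even exterior powers of a hyperbolic form:
`Λ^{2ℓ}(h × ℍ) ≃ C(h,ℓ) × ⟨(-1)^ℓ⟩ ⊥ (1/2)(C(2h,2ℓ) - C(h,ℓ)) × ℍ` for `0 ≤ ℓ ≤ h`. -/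
theorem extPower_hyperbolic_even (K : Type*) [Field K] (hchar : ringChar K ≠ 2)
    {V W : Type*} [AddCommGroup V] [Module K V] [AddCommGroup W] [Module K W]
    (h ℓ : ℕ) (hh : 0 < h) (hℓ : ℓ ≤ h)
    (B : LinearMap.BilinForm K V) (bV : Module.Basis (Fin h × Fin 2) K V)
    (hdiag : ∀ p q, B (bV p) (bV q) =
      if p = q then (if p.2 = 0 then (1 : K) else -1) else 0)
    (B' : LinearMap.BilinForm K W) (hext : IsExteriorPower K (2 * ℓ) B B') :
    QuadraticMap.Equivalent (LinearMap.BilinMap.toQuadraticMap B')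
      (QuadraticMap.weightedSumSquares K
        (Sum.elim (fun _ : Fin (h.choose ℓ) => (-1 : K) ^ ℓ)
          (fun p : Fin (((2 * h).choose (2 * ℓ) - h.choose ℓ) / 2) × Fin 2 =>
            if p.2 = 0 then (1 : K) else -1))) :=
  extPower_hyperbolic_even_general K h ℓ B bV hdiag B' hext
end
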